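/- arXiv:2002.04550 — 11 statements merged into one kernel-verified Lean document; each statement's English description precedes it below -/
import Mathlib

section
/- For every real n×n matrix A there exists a real orthogonal n×n matrix Q such that Qᵀ A Q is quasi-upper-triangular. -/
open Matrix

/-- A real `n × n` matrix `T` is quasi-upper-triangular if `T i j = 0` whenever
`(i : ℕ) > (j : ℕ) + 1`, and there is no index `i` such that both subdiagonal
entries `T (i+1) i` and `T (i+2) (i+1)` are nonzero. -/
def QuasiUpperTriangular {n : ℕ} (T : Matrix (Fin n) (Fin n) ℝ) : Prop :=
  (∀ i j : Fin n, (j : ℕ) + 1 < (i : ℕ) → T i j = 0) ∧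
  ¬ ∃ (i : ℕ) (h1 : i + 1 < n) (h2 : i + 2 < n),
      T ⟨i + 1, h1⟩ ⟨i, Nat.lt_of_succ_lt h1⟩ ≠ 0 ∧ T ⟨i + 2, h2⟩ ⟨i + 1, h1⟩ ≠ 0

/-!
Every real endomorphism has an invariant subspace of dimension one or two, spanned by `v` and
`f v` for a nonzero `v` killed by a monic factor of degree one or two of the minimal polynomial
(real irreducible polynomials have degree at most two). Completing
an orthonormal basis of such a subspace `W` by one of `Wᗮ` makes the matrix block upper
triangular, with a diagonal block of size at most two, and induction on the dimension treats
the lower right block. A diagonal block of size at most two cannot host two consecutive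
nonzero subdiagonal entries, and the subdiagonal entry just below it vanishes.
-/

open Module Polynomial

namespace Module.End

theorem exists_ne_zero_aeval_apply_eq_zero_of_mul_eq_minpoly {K V : Type*} [Field K]
    [AddCommGroup V] [Module K V] [FiniteDimensional K V] (f : End K V) {p q : K[X]}
    (hp : 0 < p.natDegree) (hq : q.Monic) (h : minpoly K f = p * q) :
    ∃ v ≠ 0, aeval f p v = 0 := by
  have hq0 : aeval f q ≠ 0 :=
    minpoly.aeval_ne_zero_of_dvdNotUnit_minpoly (Algebra.IsIntegral.isIntegral f) hq
      ⟨hq.ne_zero, p, not_isUnit_of_natDegree_pos p hp, h.trans (mul_comm p q)⟩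
  obtain ⟨w, hw⟩ : ∃ w, aeval f q w ≠ 0 := by
    by_contra! hw
    exact hq0 (LinearMap.ext hw)
  refine ⟨aeval f q w, hw, ?_⟩
  rw [← mul_apply, ← map_mul, ← h, minpoly.aeval, LinearMap.zero_apply]

variable {V : Type*} [AddCommGroup V] [Module ℝ V] [FiniteDimensional ℝ V] [Nontrivial V]

theorem exists_isMonicOfDegree_two_aeval_apply_eq_zero (f : End ℝ V) :
    ∃ p : ℝ[X], IsMonicOfDegree p 2 ∧ ∃ v ≠ 0, aeval f p v = 0 := by
  have hf := Algebra.IsIntegral.isIntegral (R := ℝ) f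
  have hmin : IsMonicOfDegree (minpoly ℝ f) ((minpoly ℝ f).natDegree - 1 + 1) :=
    ⟨by have := minpoly.natDegree_pos hf; omega, minpoly.monic hf⟩
  obtain ⟨p, q, hp, h⟩ := hmin.eq_isMonicOfDegree_one_or_two_mul
  have hp0 : 0 < p.natDegree := by rcases hp with hp | hp <;> simp [hp.natDegree_eq]
  have hq : q.Monic := (by rcases hp with hp | hp <;> exact hp.monic : p.Monic).of_mul_monic_left
    (h ▸ hmin.monic)
  obtain ⟨v, hv, hpv⟩ := f.exists_ne_zero_aeval_apply_eq_zero_of_mul_eq_minpoly hp0 hq h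
  rcases hp with hp | hp
  · exact ⟨X * p, (isMonicOfDegree_X (R := ℝ)).mul hp, v, hv, by simp [hpv]⟩
  · exact ⟨p, hp, v, hv, hpv⟩

theorem exists_mem_invtSubmodule_finrank_le_two (f : End ℝ V) :
    ∃ W ∈ f.invtSubmodule, 0 < finrank ℝ W ∧ finrank ℝ W ≤ 2 := by
  obtain ⟨p, hp, v, hv, hpv⟩ := f.exists_isMonicOfDegree_two_aeval_apply_eq_zero
  obtain ⟨a, b, rfl⟩ := isMonicOfDegree_two_iff.mp hp
  have hffv : f (f v) = -(a • f v + b • v) := by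
    rw [eq_neg_iff_add_eq_zero, ← hpv]
    simp [pow_two, add_assoc]
  have hv₀ : v ∈ Submodule.span ℝ (Set.range ![v, f v]) := Submodule.subset_span ⟨0, rfl⟩
  have hv₁ : f v ∈ Submodule.span ℝ (Set.range ![v, f v]) := Submodule.subset_span ⟨1, rfl⟩
  refine ⟨Submodule.span ℝ (Set.range ![v, f v]), ?_, ?_, ?_⟩
  · rw [mem_invtSubmodule, Submodule.span_le]
    rintro _ ⟨i, rfl⟩
    fin_cases i
    · exact hv₁
    · change f (f v) ∈ Submodule.span ℝ (Set.range ![v, f v])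
      rw [hffv]
      exact neg_mem (add_mem (Submodule.smul_mem _ a hv₁) (Submodule.smul_mem _ b hv₀))
  · exact Module.finrank_pos_iff_exists_ne_zero.mpr ⟨⟨v, hv₀⟩, by simpa using hv⟩
  · exact (finrank_range_le_card (R := ℝ) ![v, f v]).trans_eq (Fintype.card_fin 2)

end Module.End

namespace Submodule

variable {𝕜 E : Type*} [RCLike 𝕜] [NormedAddCommGroup E] [InnerProductSpace 𝕜 E]
  [FiniteDimensional 𝕜 E] (W : Submodule 𝕜 E)

noncomputable def orthogonalDecompositionBasis :
    OrthonormalBasis (Fin (finrank 𝕜 W) ⊕ Fin (finrank 𝕜 Wᗮ)) 𝕜 E :=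
  ((stdOrthonormalBasis 𝕜 W).prod (stdOrthonormalBasis 𝕜 Wᗮ)).map W.orthogonalDecomposition.symm

theorem orthogonalDecompositionBasis_inl_mem (i : Fin (finrank 𝕜 W)) :
    W.orthogonalDecompositionBasis (Sum.inl i) ∈ W := by
  simp [orthogonalDecompositionBasis]

theorem orthogonalDecompositionBasis_inr_mem (j : Fin (finrank 𝕜 Wᗮ)) :
    W.orthogonalDecompositionBasis (Sum.inr j) ∈ Wᗮ := by
  simp [orthogonalDecompositionBasis]

end Submodule

namespace OrthonormalBasis

variable {ι κ : Type*} [Fintype ι] [DecidableEq ι] [Fintype κ]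
  (b : OrthonormalBasis κ ℝ (EuclideanSpace ℝ ι))

theorem transpose_mul_mul_toMatrix_apply (A : Matrix ι ι ℝ) (k l : κ) :
    (((EuclideanSpace.basisFun ι ℝ).toBasis.toMatrix b)ᵀ * A *
      (EuclideanSpace.basisFun ι ℝ).toBasis.toMatrix b) k l =
      inner ℝ (b k) (toEuclideanLin A (b l)) := by
  simp only [Matrix.mul_apply, Finset.sum_mul, Basis.toMatrix_apply, transpose_apply,
    OrthonormalBasis.coe_toBasis_repr_apply, EuclideanSpace.basisFun_repr, PiLp.inner_apply,
    ofLp_toLpLin, toLin'_apply, mulVec, dotProduct, RCLike.inner_apply, conj_trivial]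
  rw [Finset.sum_comm]
  exact Finset.sum_congr rfl fun _ _ => Finset.sum_congr rfl fun _ _ => by ring

theorem transpose_mul_toMatrix_self [DecidableEq κ] :
    ((EuclideanSpace.basisFun ι ℝ).toBasis.toMatrix b)ᵀ *
      (EuclideanSpace.basisFun ι ℝ).toBasis.toMatrix b = 1 := by
  ext k l
  rw [← Matrix.mul_one (Matrix.transpose _), transpose_mul_mul_toMatrix_apply, toLpLin_one,
    LinearMap.id_apply, orthonormal_iff_ite.mp b.orthonormal, one_apply]

end OrthonormalBasis

theorem Matrix.exists_orthogonal_toBlocks₂₁_transpose_mul_mul_eq_zero {ι : Type*} [Fintype ι]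
    [DecidableEq ι] [Nonempty ι] (A : Matrix ι ι ℝ) :
    ∃ k m, k + m = Fintype.card ι ∧ 0 < k ∧ k ≤ 2 ∧ ∃ Q : Matrix ι (Fin k ⊕ Fin m) ℝ,
      Qᵀ * Q = 1 ∧ (Qᵀ * A * Q).toBlocks₂₁ = 0 := by
  obtain ⟨W, hW, hk₀, hk₂⟩ := Module.End.exists_mem_invtSubmodule_finrank_le_two (toEuclideanLin A)
  set b := W.orthogonalDecompositionBasis
  refine ⟨_, _, by simpa using W.finrank_add_finrank_orthogonal, hk₀, hk₂,
    (EuclideanSpace.basisFun ι ℝ).toBasis.toMatrix b, b.transpose_mul_toMatrix_self, ?_⟩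
  ext i j
  rw [toBlocks₂₁, of_apply, b.transpose_mul_mul_toMatrix_apply]
  exact W.inner_left_of_mem_orthogonal (hW (W.orthogonalDecompositionBasis_inl_mem j))
    (W.orthogonalDecompositionBasis_inr_mem i)

theorem Matrix.transpose_mul_mul_fromBlocks_of_toBlocks₂₁_eq_zero {R l m : Type*} [Semiring R]
    [Fintype l] [Fintype m] [DecidableEq l] {M : Matrix (l ⊕ m) (l ⊕ m) R}
    (hM : M.toBlocks₂₁ = 0) (Q : Matrix m m R) :
    (fromBlocks 1 0 0 Q)ᵀ * M * fromBlocks 1 0 0 Q =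
      fromBlocks M.toBlocks₁₁ (M.toBlocks₁₂ * Q) 0 (Qᵀ * M.toBlocks₂₂ * Q) := by
  rw [← fromBlocks_toBlocks M, hM, fromBlocks_transpose, fromBlocks_multiply, fromBlocks_multiply]
  simp

theorem Matrix.transpose_submatrix_mul_mul_submatrix_mul {R ι κ κ' : Type*} [CommSemiring R]
    [Fintype ι] [Fintype κ] (P : Matrix ι κ R) (F : Matrix κ κ R) (e : κ' → κ)
    (M : Matrix ι ι R) :
    ((P * F).submatrix id e)ᵀ * M * (P * F).submatrix id e =
      (Fᵀ * (Pᵀ * M * P) * F).submatrix e e := by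
  change ((P * F)ᵀ * M * (P * F)).submatrix e e = _
  simp only [transpose_mul, Matrix.mul_assoc]

theorem quasiUpperTriangular_iff {n : ℕ} {T : Matrix (Fin n) (Fin n) ℝ} :
    QuasiUpperTriangular T ↔ (∀ i j : Fin n, (j : ℕ) + 1 < i → T i j = 0) ∧
      ∀ i j l : Fin n, (i : ℕ) = j + 1 → (j : ℕ) = l + 1 → T j l ≠ 0 → T i j = 0 := by
  refine and_congr_right fun _ => ⟨fun h i j l hij hjl hjl0 => ?_, fun h => ?_⟩
  · by_contra hij0
    obtain ⟨i, hi⟩ := i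
    obtain ⟨j, hj⟩ := j
    obtain ⟨l, hl⟩ := l
    simp only at hij hjl
    subst hij hjl
    exact h ⟨l, hj, hi, hjl0, hij0⟩
  · rintro ⟨i, h1, h2, hne1, hne2⟩
    exact hne2 (h _ _ _ rfl rfl hne1)

theorem quasiUpperTriangular_fromBlocks {k m : ℕ} (hk : k ≤ 2) (B : Matrix (Fin k) (Fin k) ℝ)
    (C : Matrix (Fin k) (Fin m) ℝ) {D : Matrix (Fin m) (Fin m) ℝ} (hD : QuasiUpperTriangular D) :
    QuasiUpperTriangular
      ((fromBlocks B C 0 D).submatrix finSumFinEquiv.symm finSumFinEquiv.symm) := by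
  rw [quasiUpperTriangular_iff] at hD ⊢
  refine ⟨fun i j hij => ?_, fun i j l hij hjl hjl0 => ?_⟩
  · induction i using Fin.addCases <;> induction j using Fin.addCases <;>
      simp only [submatrix_apply, finSumFinEquiv_symm_apply_castAdd,
        finSumFinEquiv_symm_apply_natAdd, fromBlocks_apply₂₁, fromBlocks_apply₂₂,
        Matrix.zero_apply, Fin.val_castAdd, Fin.val_natAdd] at hij ⊢
    all_goals first | omega | rfl | exact hD.1 _ _ (by omega)
  · induction i using Fin.addCases <;> induction j using Fin.addCases <;>
      induction l using Fin.addCases <;>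
      simp only [submatrix_apply, finSumFinEquiv_symm_apply_castAdd,
        finSumFinEquiv_symm_apply_natAdd, fromBlocks_apply₂₁, fromBlocks_apply₂₂,
        Matrix.zero_apply, Fin.val_castAdd, Fin.val_natAdd] at hij hjl hjl0 ⊢
    all_goals
      first | omega | rfl | exact absurd rfl hjl0 | exact hD.2 _ _ _ (by omega) (by omega) hjl0

/-- Real Schur decomposition: every real square matrix is orthogonally similar to a
quasi-upper-triangular matrix. -/
theorem real_schur_decomposition (n : ℕ) (A : Matrix (Fin n) (Fin n) ℝ) :
    ∃ Q : Matrix (Fin n) (Fin n) ℝ, Qᵀ * Q = 1 ∧ QuasiUpperTriangular (Qᵀ * A * Q) := by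
  induction n using Nat.strong_induction_on with
  | _ n ih =>
  rcases n.eq_zero_or_pos with rfl | hn
  · exact ⟨1, by simp, fun i => i.elim0, by rintro ⟨i, h, -⟩; omega⟩
  have : Nonempty (Fin n) := ⟨⟨0, hn⟩⟩
  obtain ⟨k, m, hkm, hk₀, hk₂, Q₀, hQ₀, hA⟩ :=
    A.exists_orthogonal_toBlocks₂₁_transpose_mul_mul_eq_zero
  rw [Fintype.card_fin] at hkm
  subst hkm
  obtain ⟨Q₁, hQ₁, hD⟩ := ih m (by omega) (Q₀ᵀ * A * Q₀).toBlocks₂₂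
  set F := fromBlocks (1 : Matrix (Fin k) (Fin k) ℝ) 0 0 Q₁
  refine ⟨(Q₀ * F).submatrix id finSumFinEquiv.symm, ?_, ?_⟩
  · rw [← Matrix.mul_one (Matrix.transpose _), transpose_submatrix_mul_mul_submatrix_mul,
      Matrix.mul_one, hQ₀, Matrix.mul_one]
    simp [F, fromBlocks_transpose, fromBlocks_multiply, hQ₁]
  · rw [transpose_submatrix_mul_mul_submatrix_mul,
      transpose_mul_mul_fromBlocks_of_toBlocks₂₁_eq_zero hA]
    exact quasiUpperTriangular_fromBlocks hk₂ _ _ hD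
end

section
/- For every pair of real n×n matrices A and B there exist real orthogonal n×n matrices Q₁ and Q₂ such that Q₂ᵀ A Q₁ is quasi-upper-triangular and Q₂ᵀ B Q₁ is upper triangular. -/
/-!
A pencil `(A, B)` of real `n × n` matrices, `n > 0`, has a deflating subspace `V` of dimension one
or two, i.e. `dim (A V + B V) ≤ dim V`: if `B` is singular take a line in its kernel, otherwise a
line or plane invariant under `B⁻¹ A`, spanned by the real and imaginary parts of a complex
eigenvector. Orthonormal bases whose first `dim V` vectors lie in `V`, respectively whose other
vectors are orthogonal to `A V + B V`, make both matrices block upper triangular with a leading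
block of size at most two. A block that small is quasi-upper-triangular whatever it is, and a QR
decomposition makes its `B`-part triangular; the trailing block is reduced by induction.
-/

open Matrix

open Module Submodule InnerProductSpace

section FinSum

variable {k m : ℕ}

theorem finSumFinEquiv_symm_apply_of_lt (i : Fin (k + m)) (h : (i : ℕ) < k) :
    finSumFinEquiv.symm i = Sum.inl ⟨i, h⟩ :=
  finSumFinEquiv.symm_apply_eq.mpr (Fin.ext rfl)

theorem finSumFinEquiv_symm_apply_of_le (i : Fin (k + m)) (h : k ≤ (i : ℕ)) :
    finSumFinEquiv.symm i = Sum.inr ⟨i - k, by omega⟩ :=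
  finSumFinEquiv.symm_apply_eq.mpr <| Fin.ext <| by
    simp only [finSumFinEquiv_apply_right, Fin.val_natAdd]
    omega

end FinSum

namespace Matrix

section Blocks

variable {k m : ℕ} {R : Type*} [Zero R] {T₁₁ : Matrix (Fin k) (Fin k) R}
  {T₁₂ : Matrix (Fin k) (Fin m) R} {T₂₂ : Matrix (Fin m) (Fin m) R}

theorem reindex_fromBlocks_apply_of_lt_of_lt (i j : Fin (k + m)) (hi : (i : ℕ) < k)
    (hj : (j : ℕ) < k) :
    reindex finSumFinEquiv finSumFinEquiv (fromBlocks T₁₁ T₁₂ 0 T₂₂) i j =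
      T₁₁ ⟨i, hi⟩ ⟨j, hj⟩ := by
  rw [reindex_apply, submatrix_apply, finSumFinEquiv_symm_apply_of_lt i hi,
    finSumFinEquiv_symm_apply_of_lt j hj, fromBlocks_apply₁₁]

theorem reindex_fromBlocks_apply_of_lt_of_le (i j : Fin (k + m)) (hj : (j : ℕ) < k)
    (hi : k ≤ (i : ℕ)) :
    reindex finSumFinEquiv finSumFinEquiv (fromBlocks T₁₁ T₁₂ 0 T₂₂) i j = 0 := by
  rw [reindex_apply, submatrix_apply, finSumFinEquiv_symm_apply_of_le i hi,
    finSumFinEquiv_symm_apply_of_lt j hj, fromBlocks_apply₂₁, Matrix.zero_apply]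

theorem reindex_fromBlocks_apply_of_le_of_le (i j : Fin (k + m)) (hi : k ≤ (i : ℕ))
    (hj : k ≤ (j : ℕ)) :
    reindex finSumFinEquiv finSumFinEquiv (fromBlocks T₁₁ T₁₂ 0 T₂₂) i j =
      T₂₂ ⟨i - k, by omega⟩ ⟨j - k, by omega⟩ := by
  rw [reindex_apply, submatrix_apply, finSumFinEquiv_symm_apply_of_le i hi,
    finSumFinEquiv_symm_apply_of_le j hj, fromBlocks_apply₂₂]

theorem IsUpperTriangular.reindex_fromBlocks (h₁₁ : T₁₁.IsUpperTriangular)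
    (h₂₂ : T₂₂.IsUpperTriangular) :
    (reindex finSumFinEquiv finSumFinEquiv (fromBlocks T₁₁ T₁₂ 0 T₂₂)).IsUpperTriangular := by
  rw [IsUpperTriangular, blockTriangular_reindex_iff]
  rintro (i | i) (j | j) hij <;>
    simp only [Function.comp_apply, id_eq, finSumFinEquiv_apply_left, finSumFinEquiv_apply_right,
      Fin.lt_def, Fin.val_castAdd, Fin.val_natAdd] at hij
  · exact h₁₁ hij
  · omega
  · rfl
  · exact h₂₂ (show j < i by omega)

theorem eq_reindex_fromBlocks_of_lowerLeft_eq_zero {T : Matrix (Fin (k + m)) (Fin (k + m)) R}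
    (hT : ∀ i j : Fin (k + m), (j : ℕ) < k → k ≤ (i : ℕ) → T i j = 0) :
    T = reindex finSumFinEquiv finSumFinEquiv
      (fromBlocks (reindex finSumFinEquiv.symm finSumFinEquiv.symm T).toBlocks₁₁
        (reindex finSumFinEquiv.symm finSumFinEquiv.symm T).toBlocks₁₂ 0
        (reindex finSumFinEquiv.symm finSumFinEquiv.symm T).toBlocks₂₂) := by
  have h₂₁ : (reindex finSumFinEquiv.symm finSumFinEquiv.symm T).toBlocks₂₁ = 0 := by
    ext i j
    exact hT _ _ (by simp) (by simp)
  rw [← h₂₁, fromBlocks_toBlocks]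
  simp

end Blocks

section Conjugation

variable {ι κ ν R : Type*} [Fintype ι] [Fintype κ] [Fintype ν] [CommRing R]

theorem transpose_reindex_fromBlocks_mul_mul (e : ι ⊕ κ ≃ ν)
    (p₁ p₂ : Matrix ι ι R) (q₁ q₂ : Matrix κ κ R) (T₁₁ : Matrix ι ι R) (T₁₂ : Matrix ι κ R)
    (T₂₁ : Matrix κ ι R) (T₂₂ : Matrix κ κ R) :
    (reindex e e (fromBlocks p₂ 0 0 q₂))ᵀ * reindex e e (fromBlocks T₁₁ T₁₂ T₂₁ T₂₂) *
        reindex e e (fromBlocks p₁ 0 0 q₁) =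
      reindex e e (fromBlocks (p₂ᵀ * T₁₁ * p₁) (p₂ᵀ * T₁₂ * q₁) (q₂ᵀ * T₂₁ * p₁)
        (q₂ᵀ * T₂₂ * q₁)) := by
  simp [fromBlocks_transpose, fromBlocks_multiply, submatrix_mul_equiv]

theorem transpose_reindex_fromBlocks_mul_self [DecidableEq ι] [DecidableEq κ] [DecidableEq ν]
    (e : ι ⊕ κ ≃ ν) {p : Matrix ι ι R} {q : Matrix κ κ R} (hp : pᵀ * p = 1) (hq : qᵀ * q = 1) :
    (reindex e e (fromBlocks p 0 0 q))ᵀ * reindex e e (fromBlocks p 0 0 q) = 1 := by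
  simp [fromBlocks_transpose, fromBlocks_multiply, submatrix_mul_equiv, hp, hq]

end Conjugation

end Matrix

namespace QuasiUpperTriangular

theorem of_le_two {n : ℕ} (hn : n ≤ 2) (T : Matrix (Fin n) (Fin n) ℝ) :
    QuasiUpperTriangular T :=
  ⟨fun i j _ => by omega, fun ⟨_, _, _, _⟩ => by omega⟩

variable {k m : ℕ}

theorem reindex_fromBlocks {T₁₁ : Matrix (Fin k) (Fin k) ℝ} {T₁₂ : Matrix (Fin k) (Fin m) ℝ}
    {T₂₂ : Matrix (Fin m) (Fin m) ℝ} (h₁₁ : QuasiUpperTriangular T₁₁)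
    (h₂₂ : QuasiUpperTriangular T₂₂) :
    QuasiUpperTriangular (reindex finSumFinEquiv finSumFinEquiv (fromBlocks T₁₁ T₁₂ 0 T₂₂)) := by
  constructor
  · intro i j hij
    rcases lt_or_ge (j : ℕ) k with hj | hj
    · rcases lt_or_ge (i : ℕ) k with hi | hi
      · rw [reindex_fromBlocks_apply_of_lt_of_lt i j hi hj]
        exact h₁₁.1 _ _ hij
      · exact reindex_fromBlocks_apply_of_lt_of_le i j hj hi
    · rw [reindex_fromBlocks_apply_of_le_of_le i j (by omega) hj]
      exact h₂₂.1 _ _ (by simp only; omega)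
  · rintro ⟨i, h1, h2, hx, hy⟩
    rcases lt_or_ge (i + 2) k with hi | hi
    · rw [reindex_fromBlocks_apply_of_lt_of_lt _ _ (by simp only; omega) (by simp only; omega)]
        at hx hy
      exact h₁₁.2 ⟨i, by omega, hi, hx, hy⟩
    rcases lt_or_ge (i + 1) k with hi' | hi'
    · exact hy (reindex_fromBlocks_apply_of_lt_of_le _ _ hi' hi)
    rcases lt_or_ge i k with hi'' | hi''
    · exact hx (reindex_fromBlocks_apply_of_lt_of_le _ _ hi'' hi')
    rw [reindex_fromBlocks_apply_of_le_of_le _ _ (by simp only; omega) (by simp only; omega)]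
      at hx hy
    refine h₂₂.2 ⟨i - k, by omega, by omega, ?_, ?_⟩
    · convert hx using 2
      simp only [Fin.mk.injEq]
      omega
    · convert hy using 2 <;> simp only [Fin.mk.injEq] <;> omega

end QuasiUpperTriangular

namespace RealGeneralizedSchur

variable {n : ℕ}

local notation "𝔼" n => EuclideanSpace ℝ (Fin n)

theorem exists_invariant_submodule_finrank_le_two (hn : 0 < n) (C : Matrix (Fin n) (Fin n) ℝ) :
    ∃ V : Submodule ℝ (𝔼 n), 0 < finrank ℝ V ∧ finrank ℝ V ≤ 2 ∧
      V.map (toEuclideanLin C) ≤ V := by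
  have : Nonempty (Fin n) := ⟨⟨0, hn⟩⟩
  obtain ⟨μ, hμ⟩ := Module.End.exists_eigenvalue (toLin' (C.map Complex.ofReal))
  obtain ⟨z, hz, hz0⟩ := hμ.exists_hasEigenvector
  have hCz (i : Fin n) : ∑ j, (C i j : ℂ) * z j = μ * z i := by
    simpa [mulVec, dotProduct] using congrFun (Module.End.mem_eigenspace_iff.mp hz) i
  set p : 𝔼 n := WithLp.toLp 2 fun i => (z i).re
  set q : 𝔼 n := WithLp.toLp 2 fun i => (z i).im
  have hCp : toEuclideanLin C p = μ.re • p - μ.im • q := by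
    ext i
    simpa [toLpLin_apply, mulVec, dotProduct, Complex.re_sum, p, q] using
      congrArg Complex.re (hCz i)
  have hCq : toEuclideanLin C q = μ.im • p + μ.re • q := by
    ext i
    have := congrArg Complex.im (hCz i)
    simp only [Complex.im_sum, Complex.mul_im, Complex.ofReal_re, Complex.ofReal_im, zero_mul,
      add_zero] at this
    simp [toLpLin_apply, mulVec, dotProduct, p, q, this, add_comm]
  have hp : p ∈ span ℝ (Set.range ![p, q]) := subset_span ⟨0, rfl⟩
  have hq : q ∈ span ℝ (Set.range ![p, q]) := subset_span ⟨1, rfl⟩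
  refine ⟨span ℝ (Set.range ![p, q]), ?_, finrank_range_le_card ![p, q], ?_⟩
  · refine one_le_finrank_iff.mpr fun h => hz0 ?_
    rw [span_eq_bot] at h
    funext i
    refine Complex.ext ?_ ?_
    · simpa [p] using congrArg (· i) (h p ⟨0, rfl⟩)
    · simpa [q] using congrArg (· i) (h q ⟨1, rfl⟩)
  · rw [map_span_le]
    rintro _ ⟨i, rfl⟩
    fin_cases i
    · simpa [hCp] using sub_mem (smul_mem _ μ.re hp) (smul_mem _ μ.im hq)
    · simpa [hCq] using add_mem (smul_mem _ μ.im hp) (smul_mem _ μ.re hq)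

theorem exists_deflating_submodule (hn : 0 < n) (A B : Matrix (Fin n) (Fin n) ℝ) :
    ∃ V : Submodule ℝ (𝔼 n), 0 < finrank ℝ V ∧ finrank ℝ V ≤ 2 ∧
      finrank ℝ ↥(V.map (toEuclideanLin A) ⊔ V.map (toEuclideanLin B)) ≤ finrank ℝ V := by
  by_cases hB : B.det = 0
  · obtain ⟨x, hx0, hBx⟩ := exists_mulVec_eq_zero_iff.mpr hB
    have hV : finrank ℝ (ℝ ∙ (WithLp.toLp 2 x : 𝔼 n)) = 1 :=
      finrank_span_singleton (by simpa using hx0)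
    refine ⟨ℝ ∙ WithLp.toLp 2 x, by simp [hV], by simp [hV], ?_⟩
    have hBV : (ℝ ∙ (WithLp.toLp 2 x : 𝔼 n)).map (toEuclideanLin B) = ⊥ := by
      simp [map_span, toLpLin_apply, hBx]
    rw [hBV, sup_bot_eq]
    exact finrank_map_le _ _
  · obtain ⟨V, hV0, hV2, hCV⟩ := exists_invariant_submodule_finrank_le_two hn (B⁻¹ * A)
    have hA : toEuclideanLin A = toEuclideanLin B ∘ₗ toEuclideanLin (B⁻¹ * A) := by
      rw [← toLpLin_mul_same, mul_nonsing_inv_cancel_left _ _ (isUnit_iff_ne_zero.mpr hB)]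
    have hAB : V.map (toEuclideanLin A) ≤ V.map (toEuclideanLin B) := by
      rw [hA, map_comp]
      exact map_mono hCV
    refine ⟨V, hV0, hV2, ?_⟩
    rw [sup_eq_right.mpr hAB]
    exact finrank_map_le _ _

noncomputable def basisMatrix (b : OrthonormalBasis (Fin n) ℝ (𝔼 n)) : Matrix (Fin n) (Fin n) ℝ :=
  (EuclideanSpace.basisFun (Fin n) ℝ).toBasis.toMatrix b

theorem basisMatrix_transpose_mul_self (b : OrthonormalBasis (Fin n) ℝ (𝔼 n)) :
    (basisMatrix b)ᵀ * basisMatrix b = 1 := by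
  simpa [basisMatrix] using
    (EuclideanSpace.basisFun (Fin n) ℝ).toMatrix_orthonormalBasis_conjTranspose_mul_self b

theorem basisMatrix_basisFun : basisMatrix (EuclideanSpace.basisFun (Fin n) ℝ) = 1 :=
  Basis.toMatrix_self _

theorem basisMatrix_transpose_mul_mul_apply (u v : OrthonormalBasis (Fin n) ℝ (𝔼 n))
    (M : Matrix (Fin n) (Fin n) ℝ) (i j : Fin n) :
    ((basisMatrix u)ᵀ * M * basisMatrix v) i j = inner ℝ (u i) (toEuclideanLin M (v j)) := by
  simp only [basisMatrix, mul_apply, Module.Basis.toMatrix_apply, EuclideanSpace.basisFun_toBasis,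
    PiLp.basisFun_repr, transpose_apply, EuclideanSpace.inner_eq_star_dotProduct, dotProduct,
    mulVec, Finset.sum_mul, toLpLin_apply, star_trivial]
  rw [Finset.sum_comm]
  exact Finset.sum_congr rfl fun _ _ => Finset.sum_congr rfl fun _ _ => by ring

theorem exists_orthogonal_transpose_mul_isUpperTriangular (M : Matrix (Fin n) (Fin n) ℝ) :
    ∃ Q : Matrix (Fin n) (Fin n) ℝ, Qᵀ * Q = 1 ∧ (Qᵀ * M).IsUpperTriangular := by
  let u := gramSchmidtOrthonormalBasis (finrank_euclideanSpace (𝕜 := ℝ) (ι := Fin n))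
    fun j => toEuclideanLin M (EuclideanSpace.basisFun (Fin n) ℝ j)
  refine ⟨basisMatrix u, basisMatrix_transpose_mul_self u, fun i j hij => ?_⟩
  rw [← Matrix.mul_one (_ * M), ← basisMatrix_basisFun, basisMatrix_transpose_mul_mul_apply]
  exact gramSchmidtOrthonormalBasis_inv_triangular _ _ hij

theorem exists_orthonormalBasis_mem_orthogonal {k : ℕ} (W : Submodule ℝ (𝔼 n))
    (hW : finrank ℝ W ≤ k) :
    ∃ b : OrthonormalBasis (Fin n) ℝ (𝔼 n), ∀ i : Fin n, k ≤ (i : ℕ) → b i ∈ Wᗮ := by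
  set β := Module.finBasis ℝ W
  set f : Fin n → 𝔼 n := fun l => if h : (l : ℕ) < finrank ℝ W then β ⟨l, h⟩ else 0
  refine ⟨gramSchmidtOrthonormalBasis (finrank_euclideanSpace (𝕜 := ℝ) (ι := Fin n)) f,
    fun i hi => (mem_orthogonal _ _).mpr fun w hw => ?_⟩
  rw [show w = ((⟨w, hw⟩ : W) : 𝔼 n) from rfl, ← β.sum_repr ⟨w, hw⟩, coe_sum, sum_inner]
  refine Finset.sum_eq_zero fun l _ => ?_
  have hl : (l : ℕ) < n := by
    have := W.finrank_le
    rw [finrank_euclideanSpace_fin] at this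
    omega
  have := gramSchmidtOrthonormalBasis_inv_triangular
    (finrank_euclideanSpace (𝕜 := ℝ) (ι := Fin n)) f (i := ⟨l, hl⟩) (j := i)
    (show (l : ℕ) < i by omega)
  rw [coe_smul, real_inner_smul_left, real_inner_comm]
  exact mul_eq_zero_of_right _ (by simpa [f] using this)

theorem exists_orthonormalBasis_mem {k : ℕ} (V : Submodule ℝ (𝔼 n)) (hV : finrank ℝ V = k) :
    ∃ b : OrthonormalBasis (Fin n) ℝ (𝔼 n), ∀ j : Fin n, (j : ℕ) < k → b j ∈ V := by
  have hVperp : finrank ℝ Vᗮ = n - k := by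
    have := V.finrank_add_finrank_orthogonal
    rw [finrank_euclideanSpace_fin] at this
    omega
  obtain ⟨b, hb⟩ := exists_orthonormalBasis_mem_orthogonal Vᗮ hVperp.le
  refine ⟨b.reindex Fin.revPerm, fun j hj => ?_⟩
  rw [OrthonormalBasis.reindex_apply, ← V.orthogonal_orthogonal]
  exact hb _ (by simp only [Fin.revPerm_symm, Fin.revPerm_apply, Fin.val_rev]; omega)

theorem exists_orthogonal_lowerLeft_eq_zero (hn : 0 < n) (A B : Matrix (Fin n) (Fin n) ℝ) :
    ∃ k, 0 < k ∧ k ≤ 2 ∧ k ≤ n ∧ ∃ Q₁ Q₂ : Matrix (Fin n) (Fin n) ℝ,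
      Q₁ᵀ * Q₁ = 1 ∧ Q₂ᵀ * Q₂ = 1 ∧
      (∀ i j : Fin n, (j : ℕ) < k → k ≤ (i : ℕ) → (Q₂ᵀ * A * Q₁) i j = 0) ∧
      (∀ i j : Fin n, (j : ℕ) < k → k ≤ (i : ℕ) → (Q₂ᵀ * B * Q₁) i j = 0) := by
  obtain ⟨V, hV0, hV2, hW⟩ := exists_deflating_submodule hn A B
  obtain ⟨v, hv⟩ := exists_orthonormalBasis_mem V rfl
  obtain ⟨u, hu⟩ := exists_orthonormalBasis_mem_orthogonal _ hW
  have hVn : finrank ℝ V ≤ n := by simpa using V.finrank_le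
  have hzero (M : Matrix (Fin n) (Fin n) ℝ)
      (hM : V.map (toEuclideanLin M) ≤ V.map (toEuclideanLin A) ⊔ V.map (toEuclideanLin B))
      (i j : Fin n) (hj : (j : ℕ) < finrank ℝ V) (hi : finrank ℝ V ≤ (i : ℕ)) :
      ((basisMatrix u)ᵀ * M * basisMatrix v) i j = 0 := by
    rw [basisMatrix_transpose_mul_mul_apply]
    exact inner_left_of_mem_orthogonal (hM (mem_map_of_mem (hv j hj))) (hu i hi)
  exact ⟨_, hV0, hV2, hVn, _, _, basisMatrix_transpose_mul_self v,
    basisMatrix_transpose_mul_self u, hzero A le_sup_left, hzero B le_sup_right⟩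

def HasRealGeneralizedSchurForm (A B : Matrix (Fin n) (Fin n) ℝ) : Prop :=
  ∃ Q₁ Q₂ : Matrix (Fin n) (Fin n) ℝ, Q₁ᵀ * Q₁ = 1 ∧ Q₂ᵀ * Q₂ = 1 ∧
    QuasiUpperTriangular (Q₂ᵀ * A * Q₁) ∧ (Q₂ᵀ * B * Q₁).IsUpperTriangular

theorem hasRealGeneralizedSchurForm_of_le_two (hn : n ≤ 2) (A B : Matrix (Fin n) (Fin n) ℝ) :
    HasRealGeneralizedSchurForm A B := by
  obtain ⟨Q, hQ, hQB⟩ := exists_orthogonal_transpose_mul_isUpperTriangular B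
  exact ⟨1, Q, by simp, hQ, QuasiUpperTriangular.of_le_two hn _, by rwa [Matrix.mul_one]⟩

theorem HasRealGeneralizedSchurForm.of_transpose_mul_mul {A B Q₁ Q₂ : Matrix (Fin n) (Fin n) ℝ}
    (hQ₁ : Q₁ᵀ * Q₁ = 1) (hQ₂ : Q₂ᵀ * Q₂ = 1)
    (h : HasRealGeneralizedSchurForm (Q₂ᵀ * A * Q₁) (Q₂ᵀ * B * Q₁)) :
    HasRealGeneralizedSchurForm A B := by
  obtain ⟨P₁, P₂, hP₁, hP₂, hA, hB⟩ := h
  have hconj (M : Matrix (Fin n) (Fin n) ℝ) :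
      (Q₂ * P₂)ᵀ * M * (Q₁ * P₁) = P₂ᵀ * (Q₂ᵀ * M * Q₁) * P₁ := by
    simp only [transpose_mul, Matrix.mul_assoc]
  have horth {Q P : Matrix (Fin n) (Fin n) ℝ} (hQ : Qᵀ * Q = 1) (hP : Pᵀ * P = 1) :
      (Q * P)ᵀ * (Q * P) = 1 := by
    rw [transpose_mul, Matrix.mul_assoc, ← Matrix.mul_assoc Qᵀ, hQ, Matrix.one_mul, hP]
  exact ⟨Q₁ * P₁, Q₂ * P₂, horth hQ₁ hP₁, horth hQ₂ hP₂, by rwa [hconj], by rwa [hconj]⟩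

theorem HasRealGeneralizedSchurForm.of_lowerLeft_eq_zero {k m : ℕ}
    {T S : Matrix (Fin (k + m)) (Fin (k + m)) ℝ}
    (hT : ∀ i j : Fin (k + m), (j : ℕ) < k → k ≤ (i : ℕ) → T i j = 0)
    (hS : ∀ i j : Fin (k + m), (j : ℕ) < k → k ≤ (i : ℕ) → S i j = 0)
    (h₁ : HasRealGeneralizedSchurForm
      (reindex finSumFinEquiv.symm finSumFinEquiv.symm T).toBlocks₁₁
      (reindex finSumFinEquiv.symm finSumFinEquiv.symm S).toBlocks₁₁)
    (h₂ : HasRealGeneralizedSchurForm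
      (reindex finSumFinEquiv.symm finSumFinEquiv.symm T).toBlocks₂₂
      (reindex finSumFinEquiv.symm finSumFinEquiv.symm S).toBlocks₂₂) :
    HasRealGeneralizedSchurForm T S := by
  obtain ⟨p₁, p₂, hp₁, hp₂, hpT, hpS⟩ := h₁
  obtain ⟨q₁, q₂, hq₁, hq₂, hqT, hqS⟩ := h₂
  refine ⟨_, _, transpose_reindex_fromBlocks_mul_self finSumFinEquiv hp₁ hq₁,
    transpose_reindex_fromBlocks_mul_self finSumFinEquiv hp₂ hq₂, ?_, ?_⟩
  · rw [eq_reindex_fromBlocks_of_lowerLeft_eq_zero hT, transpose_reindex_fromBlocks_mul_mul,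
      Matrix.mul_zero, Matrix.zero_mul]
    exact QuasiUpperTriangular.reindex_fromBlocks hpT hqT
  · rw [eq_reindex_fromBlocks_of_lowerLeft_eq_zero hS, transpose_reindex_fromBlocks_mul_mul,
      Matrix.mul_zero, Matrix.zero_mul]
    exact IsUpperTriangular.reindex_fromBlocks hpS hqS

theorem hasRealGeneralizedSchurForm (A B : Matrix (Fin n) (Fin n) ℝ) :
    HasRealGeneralizedSchurForm A B := by
  induction n using Nat.strong_induction_on with
  | _ n ih =>
  rcases le_or_gt n 2 with hn | hn
  · exact hasRealGeneralizedSchurForm_of_le_two hn A B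
  obtain ⟨k, hk0, hk2, hkn, Q₁, Q₂, hQ₁, hQ₂, hA, hB⟩ :=
    exists_orthogonal_lowerLeft_eq_zero (by omega) A B
  obtain ⟨m, rfl⟩ : ∃ m, n = k + m := ⟨n - k, by omega⟩
  exact .of_transpose_mul_mul hQ₁ hQ₂ <| .of_lowerLeft_eq_zero hA hB
    (hasRealGeneralizedSchurForm_of_le_two hk2 _ _) (ih m (by omega) _ _)

end RealGeneralizedSchur

/-- Real generalized Schur decomposition of a matrix pencil. -/
theorem real_generalized_schur_decomposition (n : ℕ) (A B : Matrix (Fin n) (Fin n) ℝ) :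
    ∃ Q₁ Q₂ : Matrix (Fin n) (Fin n) ℝ, Q₁ᵀ * Q₁ = 1 ∧ Q₂ᵀ * Q₂ = 1 ∧
      QuasiUpperTriangular (Q₂ᵀ * A * Q₁) ∧
      (∀ i j : Fin n, j < i → (Q₂ᵀ * B * Q₁) i j = 0) := by
  obtain ⟨Q₁, Q₂, hQ₁, hQ₂, hA, hB⟩ := RealGeneralizedSchur.hasRealGeneralizedSchurForm A B
  exact ⟨Q₁, Q₂, hQ₁, hQ₂, hA, fun i j hij => hB hij⟩
end

section
/- For every pair of complex n×n matrices A and B there exist unitary n×n matrices U₁ and U₂ such that U₂ᴴ A U₁ and U₂ᴴ B U₁ are both upper triangular (where U₂ᴴ denotes the conjugate transpose of U₂). -/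
/-! Deflation. Over an algebraically closed field there are nonzero `x`, `y` such that `A x` and
`B x` both lie on the line through `y`: take `x` in the kernel of `B` if `B` is singular, and an
eigenvector of `B⁻¹ A` otherwise. Completing `x / ‖x‖` and `y / ‖y‖` to orthonormal bases gives
unitaries `U₁`, `U₂` for which the first columns of `U₂ᴴ A U₁` and `U₂ᴴ B U₁` vanish below the
diagonal; induction on the trailing `(n - 1) × (n - 1)` blocks finishes. -/

open Matrix

namespace Matrix

section OneBlockDiag

variable {R : Type*} {n : ℕ}

/-- The block-diagonal matrix `diag(1, V)`. -/
def oneBlockDiag [Zero R] [One R] (V : Matrix (Fin n) (Fin n) R) :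
    Matrix (Fin (n + 1)) (Fin (n + 1)) R :=
  of fun i j => Fin.cases (Fin.cases 1 (fun _ => 0) j) (fun i' => Fin.cases 0 (V i') j) i

section ZeroOne

variable [Zero R] [One R] (V : Matrix (Fin n) (Fin n) R)

@[simp] theorem oneBlockDiag_zero_zero : oneBlockDiag V 0 0 = 1 := rfl

@[simp] theorem oneBlockDiag_zero_succ (j : Fin n) : oneBlockDiag V 0 j.succ = 0 := rfl

@[simp] theorem oneBlockDiag_succ_zero (i : Fin n) : oneBlockDiag V i.succ 0 = 0 := rfl

@[simp] theorem oneBlockDiag_succ_succ (i j : Fin n) : oneBlockDiag V i.succ j.succ = V i j := rfl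

theorem oneBlockDiag_one : oneBlockDiag (1 : Matrix (Fin n) (Fin n) R) = 1 := by
  ext i j
  cases i using Fin.cases <;> cases j using Fin.cases <;>
    simp [one_apply, Fin.succ_ne_zero, (Fin.succ_ne_zero _).symm]

end ZeroOne

variable [Semiring R]

theorem oneBlockDiag_mul (V W : Matrix (Fin n) (Fin n) R) :
    oneBlockDiag V * oneBlockDiag W = oneBlockDiag (V * W) := by
  ext i j
  cases i using Fin.cases <;> cases j using Fin.cases <;> simp [mul_apply, Fin.sum_univ_succ]

theorem star_oneBlockDiag [StarRing R] (V : Matrix (Fin n) (Fin n) R) :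
    star (oneBlockDiag V) = oneBlockDiag (star V) := by
  ext i j
  cases i using Fin.cases <;> cases j using Fin.cases <;> simp [star_apply]

theorem oneBlockDiag_mem_unitaryGroup {R : Type*} [CommRing R] [StarRing R]
    {V : Matrix (Fin n) (Fin n) R} (hV : V ∈ unitaryGroup (Fin n) R) :
    oneBlockDiag V ∈ unitaryGroup (Fin (n + 1)) R := by
  rw [mem_unitaryGroup_iff'] at hV ⊢
  rw [star_oneBlockDiag, oneBlockDiag_mul, hV, oneBlockDiag_one]

theorem isUpperTriangular_oneBlockDiag_mul_mul {M : Matrix (Fin (n + 1)) (Fin (n + 1)) R}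
    (hM : ∀ i : Fin n, M i.succ 0 = 0) {V W : Matrix (Fin n) (Fin n) R}
    (h : (W * M.submatrix Fin.succ Fin.succ * V).IsUpperTriangular) :
    (oneBlockDiag W * M * oneBlockDiag V).IsUpperTriangular := by
  intro i j hji
  cases i using Fin.cases with
  | zero => exact absurd hji (Fin.not_lt_zero j)
  | succ i =>
    cases j using Fin.cases with
    | zero => simp [mul_apply, Fin.sum_univ_succ, hM]
    | succ j =>
      simpa [mul_apply, Fin.sum_univ_succ, Finset.sum_mul] using h (Fin.succ_lt_succ_iff.mp hji)

end OneBlockDiag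

theorem apply_eq_zero_of_mulVec_single_mem_span {ι R : Type*} [Fintype ι] [DecidableEq ι]
    [Semiring R] {M : Matrix ι ι R} {i j : ι} (h : M *ᵥ Pi.single j 1 ∈ R ∙ Pi.single j 1)
    (hij : i ≠ j) : M i j = 0 := by
  obtain ⟨a, ha⟩ := Submodule.mem_span_singleton.mp h
  simpa [mulVec_single_one, hij] using (congrFun ha i).symm

theorem star_mul_mul_mulVec_mem_span {ι R : Type*} [Fintype ι] [DecidableEq ι] [CommSemiring R]
    [StarRing R] {A U₁ U₂ : Matrix ι ι R} (hU₂ : star U₂ * U₂ = 1) {e x y : ι → R}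
    (h₁ : U₁ *ᵥ e = x) (h₂ : U₂ *ᵥ e = y) (hA : A *ᵥ x ∈ R ∙ y) :
    (star U₂ * A * U₁) *ᵥ e ∈ R ∙ e := by
  obtain ⟨a, ha⟩ := Submodule.mem_span_singleton.mp hA
  refine Submodule.mem_span_singleton.mpr ⟨a, ?_⟩
  rw [← mulVec_mulVec, ← mulVec_mulVec, h₁, ← ha, mulVec_smul, ← h₂, mulVec_mulVec, hU₂,
    one_mulVec]

theorem exists_mem_unitaryGroup_mulVec_single_eq {𝕜 ι : Type*} [RCLike 𝕜] [Fintype ι]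
    [DecidableEq ι] (i : ι) {x : EuclideanSpace 𝕜 ι} (hx : ‖x‖ = 1) :
    ∃ U ∈ unitaryGroup ι 𝕜, U *ᵥ Pi.single i 1 = x.ofLp := by
  have hsingle : Orthonormal 𝕜 (({i} : Set ι).domRestrict fun _ => x) :=
    orthonormal_subsingleton_iff.mpr fun _ => hx
  obtain ⟨b, hb⟩ := hsingle.exists_orthonormalBasis_extension_of_card_eq (by simp)
  refine ⟨(EuclideanSpace.basisFun ι 𝕜).toBasis.toMatrix b,
    (EuclideanSpace.basisFun ι 𝕜).toMatrix_orthonormalBasis_mem_unitary b, ?_⟩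
  ext k
  simp [Module.Basis.toMatrix_apply, hb i rfl]

theorem exists_ne_zero_mulVec_mem_span_and_mulVec_mem_span {K ι : Type*} [Field K]
    [IsAlgClosed K] [Fintype ι] [DecidableEq ι] [Nonempty ι] (A B : Matrix ι ι K) :
    ∃ x ≠ 0, ∃ y ≠ 0, A *ᵥ x ∈ K ∙ y ∧ B *ᵥ x ∈ K ∙ y := by
  by_cases hB : B.det = 0
  · obtain ⟨x, hx, hBx⟩ := exists_mulVec_eq_zero_iff.mpr hB
    by_cases hAx : A *ᵥ x = 0
    · exact ⟨x, hx, x, hx, by simp [hAx], by simp [hBx]⟩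
    · exact ⟨x, hx, A *ᵥ x, hAx, Submodule.mem_span_singleton_self _, by simp [hBx]⟩
  · obtain ⟨μ, hμ⟩ := Module.End.exists_eigenvalue (toLin' (B⁻¹ * A))
    obtain ⟨x, hx⟩ := hμ.exists_hasEigenvector
    have hBx : B *ᵥ x ≠ 0 := fun h => hB (exists_mulVec_eq_zero_iff.mp ⟨x, hx.2, h⟩)
    -- `A x = B (B⁻¹ A x) = μ B x`
    have hAx : A *ᵥ x = μ • B *ᵥ x := by
      have hx' : (B⁻¹ * A) *ᵥ x = μ • x := by simpa using hx.apply_eq_smul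
      rw [← mulVec_smul, ← hx', mulVec_mulVec, ← Matrix.mul_assoc,
        mul_nonsing_inv B (isUnit_iff_ne_zero.mpr hB), Matrix.one_mul]
    exact ⟨x, hx.2, B *ᵥ x, hBx, Submodule.mem_span_singleton.mpr ⟨μ, hAx.symm⟩,
      Submodule.mem_span_singleton_self _⟩

theorem exists_unitary_star_mul_mul_apply_eq_zero {ι : Type*} [Fintype ι] [DecidableEq ι] (i : ι)
    (A B : Matrix ι ι ℂ) :
    ∃ U₁ ∈ unitaryGroup ι ℂ, ∃ U₂ ∈ unitaryGroup ι ℂ,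
      ∀ k ≠ i, (star U₂ * A * U₁) k i = 0 ∧ (star U₂ * B * U₁) k i = 0 := by
  have : Nonempty ι := ⟨i⟩
  obtain ⟨x, hx, y, hy, hA, hB⟩ := exists_ne_zero_mulVec_mem_span_and_mulVec_mem_span A B
  obtain ⟨U₁, hU₁, h₁⟩ := exists_mem_unitaryGroup_mulVec_single_eq i
    (norm_smul_inv_norm (𝕜 := ℂ) (x := WithLp.toLp 2 x) (by simpa using hx))
  obtain ⟨U₂, hU₂, h₂⟩ := exists_mem_unitaryGroup_mulVec_single_eq i
    (norm_smul_inv_norm (𝕜 := ℂ) (x := WithLp.toLp 2 y) (by simpa using hy))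
  have hcol {C : Matrix ι ι ℂ} (hC : C *ᵥ x ∈ ℂ ∙ y) (k : ι) (hk : k ≠ i) :
      (star U₂ * C * U₁) k i = 0 := by
    refine apply_eq_zero_of_mulVec_single_mem_span ?_ hk
    refine star_mul_mul_mulVec_mem_span (mem_unitaryGroup_iff'.mp hU₂) h₁ h₂ ?_
    rw [WithLp.ofLp_smul, WithLp.ofLp_smul, mulVec_smul, Submodule.span_singleton_smul_eq]
    · exact Submodule.smul_mem _ _ hC
    · simpa using hy
  exact ⟨U₁, hU₁, U₂, hU₂, fun k hk => ⟨hcol hA k hk, hcol hB k hk⟩⟩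

theorem exists_unitary_isUpperTriangular_star_mul_mul (n : ℕ) (A B : Matrix (Fin n) (Fin n) ℂ) :
    ∃ U₁ ∈ unitaryGroup (Fin n) ℂ, ∃ U₂ ∈ unitaryGroup (Fin n) ℂ,
      (star U₂ * A * U₁).IsUpperTriangular ∧ (star U₂ * B * U₁).IsUpperTriangular := by
  induction n with
  | zero => exact ⟨1, one_mem _, 1, one_mem _, fun i => i.elim0, fun i => i.elim0⟩
  | succ n ih =>
    obtain ⟨U₁, hU₁, U₂, hU₂, hcol⟩ := exists_unitary_star_mul_mul_apply_eq_zero 0 A B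
    obtain ⟨V₁, hV₁, V₂, hV₂, hA, hB⟩ := ih ((star U₂ * A * U₁).submatrix Fin.succ Fin.succ)
      ((star U₂ * B * U₁).submatrix Fin.succ Fin.succ)
    have hconj (C : Matrix (Fin (n + 1)) (Fin (n + 1)) ℂ) :
        star (U₂ * oneBlockDiag V₂) * C * (U₁ * oneBlockDiag V₁)
          = oneBlockDiag (star V₂) * (star U₂ * C * U₁) * oneBlockDiag V₁ := by
      simp only [star_mul, star_oneBlockDiag, Matrix.mul_assoc]
    refine ⟨U₁ * oneBlockDiag V₁, mul_mem hU₁ (oneBlockDiag_mem_unitaryGroup hV₁),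
      U₂ * oneBlockDiag V₂, mul_mem hU₂ (oneBlockDiag_mem_unitaryGroup hV₂), ?_, ?_⟩
    · rw [hconj]
      exact isUpperTriangular_oneBlockDiag_mul_mul (fun k => (hcol k.succ k.succ_ne_zero).1) hA
    · rw [hconj]
      exact isUpperTriangular_oneBlockDiag_mul_mul (fun k => (hcol k.succ k.succ_ne_zero).2) hB

end Matrix

/-- Complex generalized Schur (QZ) decomposition of a matrix pencil. -/
theorem complex_generalized_schur_decomposition (n : ℕ) (A B : Matrix (Fin n) (Fin n) ℂ) :
    ∃ U₁ U₂ : Matrix (Fin n) (Fin n) ℂ, U₁ᴴ * U₁ = 1 ∧ U₂ᴴ * U₂ = 1 ∧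
      (∀ i j : Fin n, j < i → (U₂ᴴ * A * U₁) i j = 0) ∧
      (∀ i j : Fin n, j < i → (U₂ᴴ * B * U₁) i j = 0) := by
  obtain ⟨U₁, hU₁, U₂, hU₂, hA, hB⟩ := exists_unitary_isUpperTriangular_star_mul_mul n A B
  rw [mem_unitaryGroup_iff', star_eq_conjTranspose] at hU₁ hU₂
  rw [star_eq_conjTranspose] at hA hB
  exact ⟨U₁, U₂, hU₁, hU₂, fun i j h => hA h, fun i j h => hB h⟩
end

section
/- Let r ≥ 1 and let A₁, …, A_r be complex n×n matrices. There exist unitary n×n matrices U₁, …, U_r such that, with indices taken cyclically (U_{r+1} := U₁), the matrix U_{i+1}ᴴ A_i U_i is upper triangular for every i = 1, …, r. -/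
/-!
Induction on `n`. The cycle `A 0, …, A (r - 1)` has a periodic eigenvector: nonzero vectors
`v i` with `A i (v i) ∈ ℂ ∙ v (i + 1)`. If every `A i` is injective, push an eigenvector of the
product `A (r - 1) ⋯ A 0` around the cycle; otherwise rotate the cycle so that `A (r - 1)` kills
some `x ≠ 0`, and pull `x` back through `A (r - 2), …, A 0`, taking at each step either a
preimage of the current vector or a kernel vector. Unitaries `W i` whose first column spans
`ℂ ∙ v i` make the first column of every `(W (i + 1))ᴴ * A i * W i` vanish below the diagonal,
and the induction hypothesis, applied to the blocks left after deleting the first row and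
column, does the rest.
-/

namespace Module.End

variable {K V : Type*} [Field K] [AddCommGroup V] [Module K V]

def IsPeriodicEigenvector {r : ℕ} [NeZero r] (A : Fin r → End K V) (v : Fin r → V) : Prop :=
  (∀ i, v i ≠ 0) ∧ ∀ i, ∃ μ : K, A i (v i) = μ • v (i + 1)

theorem IsPeriodicEigenvector.of_rotate {r : ℕ} [NeZero r] {A : Fin r → End K V}
    {v : Fin r → V} (c : Fin r) (hv : IsPeriodicEigenvector (fun i ↦ A (i + c)) v) :
    IsPeriodicEigenvector A fun i ↦ v (i - c) := by
  refine ⟨fun i ↦ hv.1 _, fun i ↦ ?_⟩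
  obtain ⟨μ, hμ⟩ := hv.2 (i - c)
  exact ⟨μ, by simpa [sub_add_eq_add_sub] using hμ⟩

variable [FiniteDimensional K V]

theorem exists_ne_zero_apply_eq_smul (f : End K V) {t : V} (ht : t ≠ 0) :
    ∃ v ≠ 0, ∃ μ : K, f v = μ • t := by
  by_cases hf : Function.Injective ⇑f
  · obtain ⟨v, rfl⟩ := LinearMap.injective_iff_surjective.mp hf t
    exact ⟨v, fun hv ↦ ht (by rw [hv, map_zero]), 1, (one_smul K _).symm⟩
  · obtain ⟨v, hv, hfv⟩ : ∃ v ∈ LinearMap.ker f, v ≠ 0 :=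
      Submodule.exists_mem_ne_zero_of_ne_bot (by rwa [Ne, LinearMap.ker_eq_bot])
    exact ⟨v, hfv, 0, by rw [hv, zero_smul]⟩

theorem exists_chain_ending_at {k : ℕ} (A : Fin k → End K V) {t : V} (ht : t ≠ 0) :
    ∃ v : Fin (k + 1) → V, (∀ i, v i ≠ 0) ∧ v (Fin.last k) = t ∧
      ∀ i : Fin k, ∃ μ : K, A i (v i.castSucc) = μ • v i.succ := by
  induction k with
  | zero => exact ⟨fun _ ↦ t, fun _ ↦ ht, rfl, fun i ↦ i.elim0⟩
  | succ k ih =>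
    obtain ⟨w, hw0, hwt, hw⟩ := ih (Fin.tail A)
    obtain ⟨u, hu0, hu⟩ := (A 0).exists_ne_zero_apply_eq_smul (hw0 0)
    refine ⟨Fin.cons u w, Fin.cases hu0 hw0, hwt, Fin.cases hu fun i ↦ ?_⟩
    simpa [Fin.tail, ← Fin.succ_castSucc] using hw i

theorem exists_isPeriodicEigenvector_of_not_injective_last {k : ℕ} (A : Fin (k + 1) → End K V)
    (hA : ¬ Function.Injective ⇑(A (Fin.last k))) : ∃ v, IsPeriodicEigenvector A v := by
  obtain ⟨x, hxA, hx⟩ : ∃ x ∈ LinearMap.ker (A (Fin.last k)), x ≠ 0 :=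
    Submodule.exists_mem_ne_zero_of_ne_bot (by rwa [Ne, LinearMap.ker_eq_bot])
  obtain ⟨v, hv0, hvx, hv⟩ := exists_chain_ending_at (fun i ↦ A i.castSucc) hx
  refine ⟨v, hv0, Fin.lastCases ⟨0, by rw [hvx, hxA, zero_smul]⟩ fun i ↦ ?_⟩
  simpa [Fin.coeSucc_eq_succ] using hv i

theorem exists_isPeriodicEigenvector_of_injective [IsAlgClosed K] [Nontrivial V] {k : ℕ}
    (A : Fin (k + 1) → End K V) (hA : ∀ i, Function.Injective ⇑(A i)) :
    ∃ v, IsPeriodicEigenvector A v := by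
  -- `w j = A (j - 1) * ⋯ * A 0`
  set w : Fin (k + 2) → End K V := fun j ↦ (Fin.partialProd (MulOpposite.op ∘ A) j).unop
  have hw : ∀ j, w j.succ = A j * w j.castSucc := fun j ↦ by simp [w, Fin.partialProd_succ]
  have hw0 : w 0 = 1 := by simp [w]
  have hw_inj : ∀ j, Function.Injective ⇑(w j) :=
    Fin.induction (by rw [hw0]; exact Function.injective_id) fun j ih ↦ by
      rw [hw]; exact (hA j).comp ih
  obtain ⟨c, hc⟩ := (w (Fin.last _)).exists_eigenvalue
  obtain ⟨x, hx⟩ := hc.exists_hasEigenvector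
  have hAw : ∀ j, A j (w j.castSucc x) = w j.succ x := fun j ↦ by rw [hw]; rfl
  refine ⟨fun j ↦ w j.castSucc x, fun j ↦ (map_ne_zero_iff _ (hw_inj _)).mpr hx.2,
    Fin.lastCases ⟨c, ?_⟩ fun j ↦ ⟨1, ?_⟩⟩
  · rw [hAw, Fin.succ_last, hx.apply_eq_smul, Fin.last_add_one]
    simp [hw0]
  · rw [hAw, Fin.coeSucc_eq_succ, Fin.succ_castSucc, one_smul]

theorem exists_isPeriodicEigenvector [IsAlgClosed K] [Nontrivial V] {r : ℕ} [NeZero r]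
    (A : Fin r → End K V) : ∃ v, IsPeriodicEigenvector A v := by
  obtain ⟨k, rfl⟩ : ∃ k, r = k + 1 := Nat.exists_eq_add_one.mpr (Nat.pos_of_neZero r)
  by_cases hA : ∀ i, Function.Injective ⇑(A i)
  · exact exists_isPeriodicEigenvector_of_injective A hA
  push Not at hA
  obtain ⟨j, hj⟩ := hA
  have hlast : Fin.last k + (j + 1) = j := by
    rw [add_comm j, ← add_assoc, Fin.last_add_one, zero_add]
  obtain ⟨v, hv⟩ := exists_isPeriodicEigenvector_of_not_injective_last
    (fun i ↦ A (i + (j + 1))) (by rwa [hlast])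
  exact ⟨_, hv.of_rotate _⟩

end Module.End

namespace Matrix

theorem exists_mem_unitaryGroup_mulVec_single_eq_smul {𝕜 ι : Type*} [RCLike 𝕜] [Fintype ι]
    [DecidableEq ι] {v : ι → 𝕜} (hv : v ≠ 0) (j : ι) :
    ∃ W ∈ unitaryGroup ι 𝕜, ∃ c : 𝕜, c ≠ 0 ∧ W *ᵥ Pi.single j 1 = c • v := by
  set x : EuclideanSpace 𝕜 ι := WithLp.toLp 2 v
  have hx : x ≠ 0 := by simpa [x] using hv
  have hu : Orthonormal 𝕜 (({j} : Set ι).domRestrict fun _ ↦ (‖x‖⁻¹ : 𝕜) • x) := by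
    rw [orthonormal_subsingleton_iff]
    exact fun _ ↦ norm_smul_inv_norm hx
  obtain ⟨b, hb⟩ := hu.exists_orthonormalBasis_extension_of_card_eq (by simp)
  refine ⟨_, (EuclideanSpace.basisFun ι 𝕜).toMatrix_orthonormalBasis_mem_unitary b,
    (‖x‖⁻¹ : 𝕜), by simpa using hx, ?_⟩
  ext p
  simp [Module.Basis.toMatrix_apply, hb j rfl, x]

variable {α : Type*} {n : ℕ}

/-- The block-diagonal matrix `diag(1, V)`. -/
def blockDiagOne [Zero α] [One α] (V : Matrix (Fin n) (Fin n) α) :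
    Matrix (Fin (n + 1)) (Fin (n + 1)) α :=
  of (Fin.cons (Fin.cons 1 0) fun p ↦ Fin.cons 0 (V p))

section Apply

variable [Zero α] [One α] (V : Matrix (Fin n) (Fin n) α)

@[simp] theorem blockDiagOne_zero_zero : blockDiagOne V 0 0 = 1 := rfl
@[simp] theorem blockDiagOne_zero_succ (q : Fin n) : blockDiagOne V 0 q.succ = 0 := rfl
@[simp] theorem blockDiagOne_succ_zero (p : Fin n) : blockDiagOne V p.succ 0 = 0 := rfl
@[simp] theorem blockDiagOne_succ_succ (p q : Fin n) : blockDiagOne V p.succ q.succ = V p q := rfl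

end Apply

section Semiring

variable [Semiring α]

theorem blockDiagOne_mul_apply_succ (X : Matrix (Fin n) (Fin n) α)
    (M : Matrix (Fin (n + 1)) (Fin (n + 1)) α) (p : Fin n) (q : Fin (n + 1)) :
    (blockDiagOne X * M) p.succ q = ∑ a, X p a * M a.succ q := by
  simp [mul_apply, Fin.sum_univ_succ]

theorem mul_blockDiagOne_apply_zero (M : Matrix (Fin (n + 1)) (Fin (n + 1)) α)
    (Y : Matrix (Fin n) (Fin n) α) (p : Fin (n + 1)) :
    (M * blockDiagOne Y) p 0 = M p 0 := by
  simp [mul_apply, Fin.sum_univ_succ]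

theorem mul_blockDiagOne_apply_succ (M : Matrix (Fin (n + 1)) (Fin (n + 1)) α)
    (Y : Matrix (Fin n) (Fin n) α) (p : Fin (n + 1)) (q : Fin n) :
    (M * blockDiagOne Y) p q.succ = ∑ b, M p b.succ * Y b q := by
  simp [mul_apply, Fin.sum_univ_succ]

@[simp] theorem blockDiagOne_one : blockDiagOne (1 : Matrix (Fin n) (Fin n) α) = 1 := by
  ext p q
  cases p using Fin.cases <;> cases q using Fin.cases <;>
    simp [one_apply, Fin.succ_ne_zero, (Fin.succ_ne_zero _).symm]

theorem blockDiagOne_mul (X Y : Matrix (Fin n) (Fin n) α) :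
    blockDiagOne X * blockDiagOne Y = blockDiagOne (X * Y) := by
  ext p q
  cases p using Fin.cases <;> cases q using Fin.cases <;>
    simp [mul_apply, Fin.sum_univ_succ]

end Semiring

theorem conjTranspose_blockDiagOne [Semiring α] [StarRing α] (V : Matrix (Fin n) (Fin n) α) :
    (blockDiagOne V)ᴴ = blockDiagOne Vᴴ := by
  ext p q
  cases p using Fin.cases <;> cases q using Fin.cases <;> simp

theorem blockDiagOne_mem_unitaryGroup [CommRing α] [StarRing α] {V : Matrix (Fin n) (Fin n) α}
    (hV : V ∈ unitaryGroup (Fin n) α) : blockDiagOne V ∈ unitaryGroup (Fin (n + 1)) α := by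
  rw [mem_unitaryGroup_iff', star_eq_conjTranspose, conjTranspose_blockDiagOne, blockDiagOne_mul,
    ← star_eq_conjTranspose, mem_unitaryGroup_iff'.mp hV, blockDiagOne_one]

theorem blockTriangular_id_fin_succ_iff [Zero α] {M : Matrix (Fin (n + 1)) (Fin (n + 1)) α} :
    M.BlockTriangular id ↔
      (∀ p : Fin n, M p.succ 0 = 0) ∧ (M.submatrix Fin.succ Fin.succ).BlockTriangular id := by
  refine ⟨fun hM ↦ ⟨fun p ↦ hM (Fin.succ_pos p), fun p q h ↦ hM (Fin.succ_lt_succ_iff.mpr h)⟩,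
    fun ⟨h0, h⟩ p q hqp ↦ ?_⟩
  cases p using Fin.cases with
  | zero => exact absurd hqp (Fin.not_lt_zero q)
  | succ p =>
    cases q using Fin.cases with
    | zero => exact h0 p
    | succ q => exact h (Fin.succ_lt_succ_iff.mp hqp)

theorem blockTriangular_blockDiagOne_mul_mul [Semiring α]
    {M : Matrix (Fin (n + 1)) (Fin (n + 1)) α} (X Y : Matrix (Fin n) (Fin n) α)
    (hM : ∀ p : Fin n, M p.succ 0 = 0)
    (h : (X * M.submatrix Fin.succ Fin.succ * Y).BlockTriangular id) :
    (blockDiagOne X * M * blockDiagOne Y).BlockTriangular id := by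
  refine blockTriangular_id_fin_succ_iff.mpr ⟨fun p ↦ ?_, ?_⟩
  · simp [mul_blockDiagOne_apply_zero, blockDiagOne_mul_apply_succ, hM]
  · convert h using 1
    ext p q
    simp only [submatrix_apply, mul_blockDiagOne_apply_succ, blockDiagOne_mul_apply_succ]
    simp [mul_apply]

theorem exists_unitary_periodic_deflation {r n : ℕ} [NeZero r]
    (A : Fin r → Matrix (Fin (n + 1)) (Fin (n + 1)) ℂ) :
    ∃ W : Fin r → Matrix (Fin (n + 1)) (Fin (n + 1)) ℂ, (∀ i, W i ∈ unitaryGroup _ ℂ) ∧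
      ∀ i, ∀ p : Fin n, ((W (i + 1))ᴴ * A i * W i) p.succ 0 = 0 := by
  obtain ⟨v, hv0, hv⟩ := Module.End.exists_isPeriodicEigenvector fun i ↦ toLin' (A i)
  choose μ hμ using hv
  simp only [toLin'_apply] at hμ
  choose W hW c hc hWv using fun i ↦ exists_mem_unitaryGroup_mulVec_single_eq_smul (hv0 i) 0
  have hWv' : ∀ i, (W i)ᴴ *ᵥ v i = (c i)⁻¹ • Pi.single 0 1 := fun i ↦ by
    rw [← inv_smul_smul₀ (hc i) (v i), ← hWv, mulVec_smul, mulVec_mulVec,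
      ← star_eq_conjTranspose, mem_unitaryGroup_iff'.mp (hW i), one_mulVec]
  refine ⟨W, hW, fun i p ↦ ?_⟩
  have hcol : ((W (i + 1))ᴴ * A i * W i) *ᵥ Pi.single 0 1 =
      (c i * μ i * (c (i + 1))⁻¹) • Pi.single 0 1 := by
    rw [← mulVec_mulVec, ← mulVec_mulVec, hWv, mulVec_smul, hμ, mulVec_smul,
      mulVec_smul, hWv', smul_smul, smul_smul]
  simpa [hc i] using congrFun hcol p.succ

theorem exists_unitary_periodic_blockTriangular {r : ℕ} [NeZero r] (n : ℕ)
    (A : Fin r → Matrix (Fin n) (Fin n) ℂ) :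
    ∃ U : Fin r → Matrix (Fin n) (Fin n) ℂ, (∀ i, U i ∈ unitaryGroup _ ℂ) ∧
      ∀ i, ((U (i + 1))ᴴ * A i * U i).BlockTriangular id := by
  induction n with
  | zero => exact ⟨fun _ ↦ 1, fun _ ↦ one_mem _, fun _ p ↦ p.elim0⟩
  | succ n ih =>
    obtain ⟨W, hW, hWA⟩ := exists_unitary_periodic_deflation A
    obtain ⟨V, hV, hVA⟩ := ih fun i ↦ ((W (i + 1))ᴴ * A i * W i).submatrix Fin.succ Fin.succ
    refine ⟨fun i ↦ W i * blockDiagOne (V i),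
      fun i ↦ mul_mem (hW i) (blockDiagOne_mem_unitaryGroup (hV i)), fun i ↦ ?_⟩
    have hconj : (W (i + 1) * blockDiagOne (V (i + 1)))ᴴ * A i * (W i * blockDiagOne (V i)) =
        blockDiagOne (V (i + 1))ᴴ * ((W (i + 1))ᴴ * A i * W i) * blockDiagOne (V i) := by
      simp only [conjTranspose_mul, conjTranspose_blockDiagOne, Matrix.mul_assoc]
    rw [hconj]
    exact blockTriangular_blockDiagOne_mul_mul _ _ (hWA i) (hVA i)

end Matrix

open Matrix

/-- Complex periodic Schur decomposition: for matrices `A 0, …, A (r-1)` associated with a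
cycle, there are unitary matrices `U 0, …, U (r-1)` (indices taken cyclically) such that each
`(U (i+1 mod r))ᴴ * A i * U i` is upper triangular. -/
theorem complex_periodic_schur_decomposition (n r : ℕ) (hr : 1 ≤ r)
    (A : Fin r → Matrix (Fin n) (Fin n) ℂ) :
    ∃ U : Fin r → Matrix (Fin n) (Fin n) ℂ,
      (∀ i, (U i)ᴴ * U i = 1) ∧
      ∀ i : Fin r, ∀ p q : Fin n, q < p →
        ((U ⟨((i : ℕ) + 1) % r, Nat.mod_lt _ hr⟩)ᴴ * A i * U i) p q = 0 := by
  have : NeZero r := ⟨by omega⟩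
  obtain ⟨U, hU, hUA⟩ := exists_unitary_periodic_blockTriangular n A
  refine ⟨U, fun i ↦ mem_unitaryGroup_iff'.mp (hU i), fun i p q hqp ↦ ?_⟩
  have hsucc : (⟨((i : ℕ) + 1) % r, Nat.mod_lt _ hr⟩ : Fin r) = i + 1 := by
    ext; simp [Fin.val_add]
  rw [hsucc]
  exact hUA i hqp
end

section
/- Let k ≥ 1 and let A₁, …, A_k be complex n×n matrices. There exist unitary n×n matrices U₁, …, U_{k+1} such that U_{i+1}ᴴ A_i U_i is upper triangular for every i = 1, …, k. -/
open Matrix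

namespace Matrix

variable {𝕜 ι : Type*} [RCLike 𝕜] [Fintype ι] [LinearOrder ι] [LocallyFiniteOrderBot ι]

/-- QR decomposition: take `star Q` to be the change of basis to the Gram–Schmidt basis of the
columns of `M`, in which those columns have upper-triangular coordinates. -/
theorem exists_mem_unitaryGroup_star_mul_isUpperTriangular (M : Matrix ι ι 𝕜) :
    ∃ Q ∈ unitaryGroup ι 𝕜, (star Q * M).IsUpperTriangular := by
  let columns : ι → EuclideanSpace 𝕜 ι := fun j => WithLp.toLp 2 (Mᵀ j)
  let b := InnerProductSpace.gramSchmidtOrthonormalBasis finrank_euclideanSpace columns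
  let e := EuclideanSpace.basisFun ι 𝕜
  have hM : e.toBasis.toMatrix columns = M := rfl
  refine ⟨star (b.toBasis.toMatrix e),
    Unitary.star_mem (b.toMatrix_orthonormalBasis_mem_unitary e), ?_⟩
  rw [star_star, ← hM, ← e.coe_toBasis, Module.Basis.toMatrix_mul_toMatrix]
  exact InnerProductSpace.gramSchmidtOrthonormalBasis_inv_isUpperTriangular _ columns

theorem exists_unitaryGroup_path_isUpperTriangular {k : ℕ} (A : Fin k → Matrix ι ι 𝕜) :
    ∃ U : Fin (k + 1) → unitaryGroup ι 𝕜,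
      ∀ i, (star (U i.succ : Matrix ι ι 𝕜) * A i * U i.castSucc).IsUpperTriangular := by
  induction k with
  | zero => exact ⟨fun _ => 1, fun i => i.elim0⟩
  | succ k ih =>
    obtain ⟨U, hU⟩ := ih (Fin.init A)
    obtain ⟨Q, hQ, hQA⟩ := exists_mem_unitaryGroup_star_mul_isUpperTriangular
      (A (Fin.last k) * (U (Fin.last k) : Matrix ι ι 𝕜))
    refine ⟨Fin.snoc U ⟨Q, hQ⟩, Fin.lastCases ?_ fun i => ?_⟩
    · simpa [mul_assoc] using hQA
    · rw [Fin.succ_castSucc, Fin.snoc_castSucc, Fin.snoc_castSucc]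
      exact hU i

end Matrix

theorem complex_path_schur_general (n k : ℕ)
    (A : Fin k → Matrix (Fin n) (Fin n) ℂ) :
    ∃ U : Fin (k + 1) → Matrix (Fin n) (Fin n) ℂ,
      (∀ i, (U i)ᴴ * U i = 1) ∧
      ∀ i : Fin k, ∀ p q : Fin n, q < p →
        ((U i.succ)ᴴ * A i * U i.castSucc) p q = 0 := by
  obtain ⟨U, hU⟩ := exists_unitaryGroup_path_isUpperTriangular A
  exact ⟨fun i => U i, fun i => UnitaryGroup.star_mul_self (U i), fun i _ _ hqp => hU i hqp⟩

/-- Path-graph instance of the simultaneous unitary triangularization theorem: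
for matrices `A 0, …, A (k-1)` along a path there are unitary matrices
`U 0, …, U k` such that each `(U (i+1))ᴴ * A i * U i` is upper triangular. -/
theorem complex_path_schur (n k : ℕ) (hk : 1 ≤ k)
    (A : Fin k → Matrix (Fin n) (Fin n) ℂ) :
    ∃ U : Fin (k + 1) → Matrix (Fin n) (Fin n) ℂ,
      (∀ i, (U i)ᴴ * U i = 1) ∧
      ∀ i : Fin k, ∀ p q : Fin n, q < p →
        ((U i.succ)ᴴ * A i * U i.castSucc) p q = 0 :=
  complex_path_schur_general n k A
end

section
/- For every pair of complex n×n matrices A and B there exist unitary n×n matrices U and V such that Uᴴ A U and Vᴴ B U are both upper triangular. -/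
/-!
Take an orthonormal Schur basis `u` of `A`, i.e. one in which `A` is upper triangular: choose a
unit eigenvector `e` of `A` and recurse on the compression of `A` to `eᗮ`. Then apply
Gram–Schmidt to the family `B u₀, B u₁, …`: the resulting orthonormal basis `v` satisfies
`⟪vᵢ, B uⱼ⟫ = 0` for `j < i` (a QR decomposition of `B U`). The matrices `U`, `V` with columns
`u`, `v` do the job.
-/

open Matrix Module InnerProductSpace

theorem LinearMap.toMatrix_orthonormalBasis_apply {𝕜 E F ι κ : Type*} [RCLike 𝕜]
    [NormedAddCommGroup E] [InnerProductSpace 𝕜 E] [NormedAddCommGroup F]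
    [InnerProductSpace 𝕜 F] [Fintype ι] [DecidableEq ι] [Fintype κ]
    (u : OrthonormalBasis ι 𝕜 E) (v : OrthonormalBasis κ 𝕜 F) (T : E →ₗ[𝕜] F) (i : κ) (j : ι) :
    LinearMap.toMatrix u.toBasis v.toBasis T i j = ⟪v i, T (u j)⟫_𝕜 := by
  simp [LinearMap.toMatrix_apply, OrthonormalBasis.repr_apply_apply]

theorem Matrix.conjTranspose_basisFun_toMatrix_mul_mul_basisFun_toMatrix {𝕜 ι : Type*}
    [RCLike 𝕜] [Fintype ι] [DecidableEq ι] (u v : OrthonormalBasis ι 𝕜 (EuclideanSpace 𝕜 ι))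
    (M : Matrix ι ι 𝕜) :
    ((EuclideanSpace.basisFun ι 𝕜).toBasis.toMatrix v)ᴴ * M *
        (EuclideanSpace.basisFun ι 𝕜).toBasis.toMatrix u =
      LinearMap.toMatrix u.toBasis v.toBasis M.toEuclideanLin := by
  ext i j
  have hcol (b : OrthonormalBasis ι 𝕜 (EuclideanSpace 𝕜 ι)) (k l : ι) :
      (EuclideanSpace.basisFun ι 𝕜).toBasis.toMatrix b k l = b l k := rfl
  simp only [mul_apply, conjTranspose_apply, hcol, LinearMap.toMatrix_orthonormalBasis_apply,
    EuclideanSpace.inner_eq_star_dotProduct, dotProduct, ofLp_toLpLin, toLin'_apply, mulVec,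
    Finset.sum_mul, Pi.star_apply]
  rw [Finset.sum_comm]
  exact Finset.sum_congr rfl fun _ _ => Finset.sum_congr rfl fun _ _ => by ring

theorem Orthonormal.fin_cons {𝕜 E : Type*} [RCLike 𝕜] [NormedAddCommGroup E]
    [InnerProductSpace 𝕜 E] {n : ℕ} {e : E} {v : Fin n → E} (hv : Orthonormal 𝕜 v)
    (he : ‖e‖ = 1) (hev : ∀ i, ⟪e, v i⟫_𝕜 = 0) :
    Orthonormal 𝕜 (Fin.cons e v : Fin (n + 1) → E) := by
  rw [orthonormal_iff_ite] at hv ⊢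
  intro i j
  cases i using Fin.cases <;> cases j using Fin.cases <;>
    simp [hv, hev, he, inner_eq_zero_symm.mp (hev _), Fin.succ_ne_zero,
      (Fin.succ_ne_zero _).symm]

theorem LinearMap.exists_orthonormalBasis_toMatrix_isUpperTriangular {E : Type*}
    [NormedAddCommGroup E] [InnerProductSpace ℂ E] [FiniteDimensional ℂ E] {n : ℕ}
    (hn : finrank ℂ E = n) (T : E →ₗ[ℂ] E) :
    ∃ b : OrthonormalBasis (Fin n) ℂ E,
      (LinearMap.toMatrix b.toBasis b.toBasis T).IsUpperTriangular := by
  induction n generalizing E with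
  | zero => exact ⟨(stdOrthonormalBasis ℂ E).reindex (finCongr hn), fun i => i.elim0⟩
  | succ n ih =>
    have : Nontrivial E := Module.nontrivial_of_finrank_eq_succ hn
    obtain ⟨μ, hμ⟩ := Module.End.exists_eigenvalue T
    obtain ⟨v, hv⟩ := hμ.exists_hasEigenvector
    set e : E := (‖v‖⁻¹ : ℂ) • v
    have he : ‖e‖ = 1 := by simp [e, norm_smul, hv.2]
    have hTe : T e = μ • e := by simp [e, hv.apply_eq_smul, smul_comm μ]
    set W := (ℂ ∙ e)ᗮ
    have hW : finrank ℂ W = n := by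
      have : Fact (finrank ℂ E = n + 1) := ⟨hn⟩
      exact Submodule.finrank_orthogonal_span_singleton (by rintro h; simp [h] at he)
    obtain ⟨b', hb'⟩ := ih hW (W.orthogonalProjectionOnto.toLinearMap ∘ₗ T ∘ₗ W.subtype)
    have hb'e (i : Fin n) : ⟪e, (b' i : E)⟫_ℂ = 0 :=
      Submodule.mem_orthogonal_singleton_iff_inner_right.mp (b' i).2
    have hon : Orthonormal ℂ (Fin.cons e (fun i => (b' i : E)) : Fin (n + 1) → E) :=
      (b'.orthonormal.comp_linearIsometry W.subtypeₗᵢ).fin_cons he hb'e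
    let b := OrthonormalBasis.mk hon
      (hon.linearIndependent.span_eq_top_of_card_eq_finrank' (by simp [hn])).ge
    refine ⟨b, fun i j hij => ?_⟩
    obtain ⟨i, rfl⟩ := Fin.exists_succ_eq.mpr (Fin.ne_zero_of_lt hij)
    rw [LinearMap.toMatrix_orthonormalBasis_apply]
    cases j using Fin.cases with
    | zero => simp [b, hTe, inner_smul_right, inner_eq_zero_symm.mp (hb'e i)]
    | succ j =>
      have hcompressed := hb' (Fin.succ_lt_succ_iff.mp hij)
      rw [LinearMap.toMatrix_orthonormalBasis_apply, LinearMap.comp_apply, LinearMap.comp_apply,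
        ContinuousLinearMap.coe_coe, Submodule.inner_orthogonalProjectionOnto_eq_of_mem_left]
        at hcompressed
      simpa [b] using hcompressed

/-- Pseudotree with one loop (carrying `A`) and one pendant edge (carrying `B`):
simultaneous unitary upper-triangularization. -/
theorem complex_loop_plus_edge_schur (n : ℕ) (A B : Matrix (Fin n) (Fin n) ℂ) :
    ∃ U V : Matrix (Fin n) (Fin n) ℂ, Uᴴ * U = 1 ∧ Vᴴ * V = 1 ∧
      (∀ i j : Fin n, j < i → (Uᴴ * A * U) i j = 0) ∧
      (∀ i j : Fin n, j < i → (Vᴴ * B * U) i j = 0) := by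
  obtain ⟨u, hu⟩ :=
    (toEuclideanLin A).exists_orthonormalBasis_toMatrix_isUpperTriangular finrank_euclideanSpace_fin
  let v := gramSchmidtOrthonormalBasis (finrank_euclideanSpace (𝕜 := ℂ) (ι := Fin n))
    fun j => toEuclideanLin B (u j)
  let e := EuclideanSpace.basisFun (Fin n) ℂ
  refine ⟨e.toBasis.toMatrix u, e.toBasis.toMatrix v,
    e.toMatrix_orthonormalBasis_conjTranspose_mul_self u,
    e.toMatrix_orthonormalBasis_conjTranspose_mul_self v, fun i j hij => ?_, fun i j hij => ?_⟩
  · rw [conjTranspose_basisFun_toMatrix_mul_mul_basisFun_toMatrix]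
    exact hu hij
  · rw [conjTranspose_basisFun_toMatrix_mul_mul_basisFun_toMatrix,
      LinearMap.toMatrix_orthonormalBasis_apply]
    exact gramSchmidtOrthonormalBasis_inv_triangular _ _ hij
end

section
/- For every pair of real n×n matrices A and B there exist real orthogonal n×n matrices Q and P such that Qᵀ A Q is quasi-upper-triangular and Pᵀ B Q is upper triangular. -/
/-!
Over `ℝ` irreducible polynomials have degree at most two, so every operator `f` has an invariant
subspace `U` of dimension one or two: take `v ≠ 0` with `p(f) v = 0` for an irreducible factor `p`
of the minimal polynomial, and `U = {r(f) v | deg r < deg p}`. Inducting through `V ⧸ U` gives a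
complete flag of which, among any two consecutive members, one is `A`-invariant; the matrix of `A`
in an orthonormal basis `q` adapted to this flag is quasi-upper-triangular. For `B`, Gram–Schmidt
applied to `B q₀, B q₁, …` gives an orthonormal basis `p` with `⟪pᵢ, B qⱼ⟫ = 0` for `j < i`,
i.e. a QR decomposition of `B Q`.
-/

open Matrix

open Module Polynomial
open scoped InnerProductSpace

namespace Submodule

variable {K V : Type*} [Field K] [AddCommGroup V] [Module K V] [FiniteDimensional K V]

theorem finrank_comap_mkQ (N : Submodule K V) (S : Submodule K (V ⧸ N)) :
    finrank K (S.comap N.mkQ) = finrank K S + finrank K N := by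
  set X := S.comap N.mkQ
  have hNX : N ≤ X := fun x hx => by simp [X, (Quotient.mk_eq_zero N).mpr hx]
  have hrange : LinearMap.range (N.mkQ.domRestrict X) = S := by
    rw [LinearMap.range_domRestrict, map_comap_eq_of_surjective N.mkQ_surjective]
  have hker : LinearMap.ker (N.mkQ.domRestrict X) = N.comap X.subtype := by
    rw [LinearMap.ker_domRestrict, ker_mkQ]
  have := LinearMap.finrank_range_add_finrank_ker (N.mkQ.domRestrict X)
  rw [hrange, hker, (comapSubtypeEquivOfLe hNX).finrank_eq] at this
  exact this.symm

end Submodule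

namespace Module.End

section Field

variable {K V : Type*} [Field K] [AddCommGroup V] [Module K V]

structure IsQuasiTriangularFlag (f : End K V) (W : ℕ → Submodule K V) : Prop where
  monotone : Monotone W
  finrank_eq : ∀ j, finrank K (W j) = min j (finrank K V)
  mem_invtSubmodule : ∀ j, W j ∈ f.invtSubmodule ∨ W (j + 1) ∈ f.invtSubmodule

theorem IsQuasiTriangularFlag.apply_mem_succ {f : End K V} {W : ℕ → Submodule K V}
    (hW : f.IsQuasiTriangularFlag W) {j : ℕ} {x : V} (hx : x ∈ W j) : f x ∈ W (j + 1) := by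
  rcases hW.mem_invtSubmodule j with hj | hj
  · exact hW.monotone j.le_succ (hj hx)
  · exact hj (hW.monotone j.le_succ hx)

theorem comap_mkQ_mem_invtSubmodule {f : End K V} {N : Submodule K V}
    (hN : N ∈ f.invtSubmodule) {S : Submodule K (V ⧸ N)}
    (hS : S ∈ invtSubmodule (N.mapQ N f hN)) : S.comap N.mkQ ∈ f.invtSubmodule :=
  fun _ hx => hS hx

variable [FiniteDimensional K V]

theorem ker_aeval_ne_bot_of_irreducible_dvd_minpoly (f : End K V) {p : K[X]}
    (hp : Irreducible p) (hdvd : p ∣ minpoly K f) : LinearMap.ker (aeval f p) ≠ ⊥ := by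
  intro hker
  obtain ⟨q, hq⟩ := hdvd
  have hunit : IsUnit (aeval f p) := (LinearMap.isUnit_iff_ker_eq_bot _).mpr hker
  have hq0 : aeval f q = 0 := by
    rw [← hunit.mul_right_eq_zero, ← map_mul, ← hq, minpoly.aeval]
  have hq_ne : q ≠ 0 := by
    rintro rfl
    exact minpoly.ne_zero (Algebra.IsIntegral.isIntegral f) (by simpa using hq)
  have hle := natDegree_le_of_dvd (minpoly.dvd K f hq0) hq_ne
  rw [hq, natDegree_mul hp.ne_zero hq_ne] at hle
  have := hp.natDegree_pos
  omega

theorem IsQuasiTriangularFlag.of_quotient {f : End K V} {U L : Submodule K V}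
    (hU : U ∈ f.invtSubmodule) (hU2 : finrank K U ≤ 2) (hLU : L ≤ U) (hL : finrank K L = 1)
    {W : ℕ → Submodule K (V ⧸ U)} (hW : IsQuasiTriangularFlag (U.mapQ U f hU) W) :
    f.IsQuasiTriangularFlag fun j =>
      if j < finrank K U then (if j = 0 then ⊥ else L) else (W (j - finrank K U)).comap U.mkQ := by
  set d := finrank K U
  have hd : 1 ≤ d := hL ▸ Submodule.finrank_mono hLU
  have hdim : finrank K (V ⧸ U) + d = finrank K V := U.finrank_quotient_add_finrank
  have hW0 : (W 0).comap U.mkQ = U := by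
    have : W 0 = ⊥ := Submodule.finrank_eq_zero.mp (by simpa using hW.finrank_eq 0)
    rw [this, Submodule.comap_bot, Submodule.ker_mkQ]
  -- The new flag starts `⊥, L, U` (or `⊥, U`); as `⊥` and `U` are invariant, any line `L ≤ U` will do.
  refine ⟨monotone_nat_of_le_succ fun j => ?_, fun j => ?_, fun j => ?_⟩
  · split_ifs <;> first
      | omega
      | exact bot_le
      | exact le_rfl
      | (rw [show j + 1 - d = 0 by omega, hW0]; first | exact bot_le | exact hLU)
      | exact Submodule.comap_mono (hW.monotone (by omega))
  · by_cases h1 : j < d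
    · rw [if_pos h1]
      by_cases h2 : j = 0
      · simp [h2]
      · have : d ≤ finrank K V := hdim ▸ Nat.le_add_left _ _
        rw [if_neg h2, hL]
        omega
    · rw [if_neg h1, Submodule.finrank_comap_mkQ, hW.finrank_eq]
      omega
  · by_cases h1 : j + 1 < d
    · left
      rw [if_pos (by omega : j < d), if_pos (by omega : j = 0)]
      exact invtSubmodule.bot_mem f
    by_cases h2 : j < d
    · right
      simpa [h1, show j + 1 - d = 0 by omega, hW0] using hU
    · simp only [h1, h2, if_false, show j + 1 - d = j - d + 1 by omega]
      exact (hW.mem_invtSubmodule (j - d)).imp (comap_mkQ_mem_invtSubmodule hU)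
        (comap_mkQ_mem_invtSubmodule hU)

end Field

section Real

variable {V : Type*} [AddCommGroup V] [Module ℝ V] [FiniteDimensional ℝ V]

theorem exists_mem_invtSubmodule_finrank_pos_le_two [Nontrivial V] (f : End ℝ V) :
    ∃ U ∈ f.invtSubmodule, 0 < finrank ℝ U ∧ finrank ℝ U ≤ 2 := by
  obtain ⟨p, hmonic, hirr, hdvd⟩ :=
    exists_monic_irreducible_factor (minpoly ℝ f) (minpoly.not_isUnit ℝ f)
  obtain ⟨v, hv, hv0⟩ :=
    (Submodule.ne_bot_iff _).mp (f.ker_aeval_ne_bot_of_irreducible_dvd_minpoly hirr hdvd)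
  rw [LinearMap.mem_ker] at hv
  let φ : ℝ[X] →ₗ[ℝ] V := LinearMap.applyₗ v ∘ₗ (aeval f).toLinearMap
  have hφ : ∀ r, φ r = φ (r %ₘ p) := by
    intro r
    conv_lhs => rw [← modByMonic_add_div r p]
    simp [φ, mul_comm p, Module.End.mul_apply, hv]
  have hdeg : (p.natDegree : WithBot ℕ) = p.degree := (degree_eq_natDegree hirr.ne_zero).symm
  refine ⟨(degreeLT ℝ p.natDegree).map φ, ?_, ?_, ?_⟩
  · rintro _ ⟨r, -, rfl⟩
    refine ⟨(X * r) %ₘ p, mem_degreeLT.mpr (hdeg ▸ degree_modByMonic_lt _ hmonic), ?_⟩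
    simp [← hφ, φ, Module.End.mul_apply]
  · refine Submodule.one_le_finrank_iff.mpr
      ((Submodule.ne_bot_iff _).mpr ⟨v, ⟨1, ?_, by simp [φ]⟩, hv0⟩)
    exact mem_degreeLT.mpr (by rw [degree_one]; exact_mod_cast hirr.natDegree_pos)
  · calc finrank ℝ ((degreeLT ℝ p.natDegree).map φ)
        ≤ finrank ℝ (degreeLT ℝ p.natDegree) := Submodule.finrank_map_le _ _
      _ = p.natDegree := by simp [(degreeLTEquiv ℝ p.natDegree).finrank_eq]
      _ ≤ 2 := hirr.natDegree_le_two

theorem exists_isQuasiTriangularFlag (f : End ℝ V) : ∃ W, f.IsQuasiTriangularFlag W := by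
  induction hn : finrank ℝ V using Nat.strong_induction_on generalizing V with
  | _ n ih =>
  rcases (finrank ℝ V).eq_zero_or_pos with h0 | hpos
  · exact ⟨fun _ => ⊥, monotone_const, by simp [h0], fun _ => .inl (invtSubmodule.bot_mem f)⟩
  have : Nontrivial V := Module.nontrivial_of_finrank_pos hpos
  obtain ⟨U, hU, hU0, hU2⟩ := f.exists_mem_invtSubmodule_finrank_pos_le_two
  obtain ⟨v, hvU, hv0⟩ := Submodule.exists_mem_ne_zero_of_ne_bot
    (Submodule.one_le_finrank_iff.mp hU0)
  have hlt : finrank ℝ (V ⧸ U) < n := by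
    have := U.finrank_quotient_add_finrank
    omega
  obtain ⟨W, hW⟩ := ih _ hlt (U.mapQ U f hU) rfl
  exact ⟨_, hW.of_quotient hU hU2 ((Submodule.span_singleton_le_iff_mem _ _).mpr hvU)
    (finrank_span_singleton hv0)⟩

end Real

end Module.End

section InnerProductSpace

variable {𝕜 E : Type*} [RCLike 𝕜] [NormedAddCommGroup E] [InnerProductSpace 𝕜 E]
  [FiniteDimensional 𝕜 E]

theorem exists_orthonormal_mem_orthogonal_inf {n : ℕ} {W : ℕ → Submodule 𝕜 E} (hW : Monotone W)
    (hrank : ∀ j, finrank 𝕜 (W j) = min j n) :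
    ∃ q : Fin n → E, Orthonormal 𝕜 q ∧ ∀ j : Fin n, q j ∈ (W j)ᗮ ⊓ W (j + 1) := by
  have hunit : ∀ j : Fin n, ∃ x ∈ (W j)ᗮ ⊓ W (j + 1), ‖x‖ = 1 := by
    intro j
    have hline : finrank 𝕜 ((W j)ᗮ ⊓ W (j + 1) : Submodule 𝕜 E) = 1 :=
      Submodule.finrank_add_inf_finrank_orthogonal' (hW j.val.le_succ)
        (by rw [hrank, hrank]; omega)
    obtain ⟨v, hv, hv0⟩ := Submodule.exists_mem_ne_zero_of_ne_bot
      (Submodule.one_le_finrank_iff.mp hline.ge)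
    exact ⟨(‖v‖⁻¹ : 𝕜) • v, Submodule.smul_mem _ _ hv, norm_smul_inv_norm hv0⟩
  choose q hqW hq1 using hunit
  refine ⟨q, ⟨hq1, fun i j hij => ?_⟩, hqW⟩
  rcases hij.lt_or_gt with h | h
  · exact Submodule.inner_right_of_mem_orthogonal (hW h (hqW i).2) (hqW j).1
  · exact Submodule.inner_left_of_mem_orthogonal (hW h (hqW j).2) (hqW i).1

end InnerProductSpace

theorem Module.End.IsQuasiTriangularFlag.quasiUpperTriangular {E : Type*}
    [NormedAddCommGroup E] [InnerProductSpace ℝ E] {f : Module.End ℝ E} {W : ℕ → Submodule ℝ E}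
    (hW : f.IsQuasiTriangularFlag W) {n : ℕ} {q : Fin n → E}
    (hq : ∀ j : Fin n, q j ∈ (W j)ᗮ ⊓ W (j + 1)) :
    QuasiUpperTriangular (Matrix.of fun i j => ⟪q i, f (q j)⟫_ℝ) := by
  have hperp {i : Fin n} {k : ℕ} {x : E} (hk : k ≤ i) (hx : x ∈ W k) : ⟪q i, x⟫_ℝ = 0 :=
    Submodule.inner_left_of_mem_orthogonal (hW.monotone hk hx) (hq i).1
  refine ⟨fun i j hij => hperp (k := j + 2) (by omega) (hW.apply_mem_succ (hq j).2), ?_⟩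
  rintro ⟨i, h1, h2, hne1, hne2⟩
  rcases hW.mem_invtSubmodule (i + 1) with hinv | hinv
  · exact hne1 (hperp le_rfl (hinv (hq ⟨i, by omega⟩).2))
  · exact hne2 (hperp le_rfl (hinv (hq ⟨i + 1, h1⟩).2))

namespace Matrix

variable {m ι κ : Type*} [Fintype m] [DecidableEq m]

theorem transpose_of_mul_mul_of (M : Matrix m m ℝ) (q : ι → EuclideanSpace ℝ m)
    (r : κ → EuclideanSpace ℝ m) :
    (of fun k i => q i k)ᵀ * M * of (fun k j => r j k) =
      of fun i j => ⟪q i, toEuclideanLin M (r j)⟫_ℝ := by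
  ext i j
  simp [mul_apply, PiLp.inner_apply, Finset.sum_mul, mulVec, dotProduct]
  rw [Finset.sum_comm]
  exact Finset.sum_congr rfl fun _ _ => Finset.sum_congr rfl fun _ _ => by ring

theorem transpose_of_mul_of_eq_one {q : m → EuclideanSpace ℝ m} (hq : Orthonormal ℝ q) :
    (of fun k i => q i k)ᵀ * of (fun k j => q j k) = 1 := by
  rw [← Matrix.mul_one (of fun k i => q i k)ᵀ, transpose_of_mul_mul_of]
  ext i j
  simp [orthonormal_iff_ite.mp hq, one_apply]

end Matrix

/-- Pseudotree with one loop (carrying `A`) and one pendant edge (carrying `B`):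
simultaneous orthogonal (quasi-)upper-triangularization. -/
theorem real_loop_plus_edge_schur (n : ℕ) (A B : Matrix (Fin n) (Fin n) ℝ) :
    ∃ Q P : Matrix (Fin n) (Fin n) ℝ, Qᵀ * Q = 1 ∧ Pᵀ * P = 1 ∧
      QuasiUpperTriangular (Qᵀ * A * Q) ∧
      (∀ i j : Fin n, j < i → (Pᵀ * B * Q) i j = 0) := by
  obtain ⟨W, hW⟩ := Module.End.exists_isQuasiTriangularFlag (toEuclideanLin A)
  obtain ⟨q, hq, hqW⟩ :=
    exists_orthonormal_mem_orthogonal_inf (n := n) hW.monotone (by simpa using hW.finrank_eq)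
  let p := InnerProductSpace.gramSchmidtOrthonormalBasis (𝕜 := ℝ) (by simp)
    fun j => toEuclideanLin B (q j)
  refine ⟨of fun k j => q j k, of fun k i => p i k, transpose_of_mul_of_eq_one hq,
    transpose_of_mul_of_eq_one p.orthonormal, ?_, fun i j hij => ?_⟩
  · rw [transpose_of_mul_mul_of]
    exact hW.quasiUpperTriangular hqW
  · rw [transpose_of_mul_mul_of, of_apply]
    exact InnerProductSpace.gramSchmidtOrthonormalBasis_inv_triangular _ _ hij
end

section
/- Let V be a finite type of vertices, and for every ordered pair of vertices i, j let E i j be a finite type of directed edges from i to j, with a complex n×n matrix A e assigned to each edge e ∈ E i j. Assume: (1) there are no loops, i.e., E i i is empty for every i; (2) between any unordered pair of distinct vertices there is at most one edge, i.e., the sum type (E i j) ⊕ (E j i) is a subsingleton for all i ≠ j; (3) the simple graph G on V with G.Adj i j ↔ (i ≠ j ∧ (Nonempty (E i j) ∨ Nonempty (E j i))) is acyclic. Then there exists a family of unitary n×n matrices U v, one for each vertex v, such that for every edge e ∈ E i j the matrix (U j)ᴴ (A e) (U i) is upper triangular. -/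
open Matrix SimpleGraph Finset



lemma euclid_finrank (n : ℕ) : Module.finrank ℂ (EuclideanSpace ℂ (Fin n)) = Fintype.card (Fin n) := by
  simp

lemma qr_left (n : ℕ) (M : Matrix (Fin n) (Fin n) ℂ) :
    ∃ Q : Matrix (Fin n) (Fin n) ℂ, Qᴴ * Q = 1 ∧
      ∀ p q : Fin n, q < p → (Qᴴ * M) p q = 0 := by
  classical
  haveI : WellFoundedLT (Fin n) := inferInstance
  let f : Fin n → EuclideanSpace ℂ (Fin n) := fun j => WithLp.toLp 2 (fun k => M k j)
  let B : OrthonormalBasis (Fin n) ℂ (EuclideanSpace ℂ (Fin n)) :=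
    @InnerProductSpace.gramSchmidtOrthonormalBasis ℂ (EuclideanSpace ℂ (Fin n)) _ _ _ (Fin n) _ _
      this _ _ (euclid_finrank n) f
  refine ⟨Matrix.of fun k p => B p k, ?_, ?_⟩
  · ext p q
    have horth := orthonormal_iff_ite.mp B.orthonormal p q
    rw [PiLp.inner_apply] at horth
    simp only [RCLike.inner_apply] at horth
    simpa [Matrix.mul_apply, Matrix.conjTranspose_apply, Matrix.one_apply, mul_comm] using horth
  · intro p q hqp
    have h := @InnerProductSpace.gramSchmidtOrthonormalBasis_inv_triangular ℂ (EuclideanSpace ℂ (Fin n)) _ _ _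
      (Fin n) _ _ this _ _ (euclid_finrank n) f q p hqp
    rw [PiLp.inner_apply] at h
    simp only [RCLike.inner_apply] at h
    simpa [Matrix.mul_apply, Matrix.conjTranspose_apply, f, mul_comm] using h

lemma qr_right (n : ℕ) (M : Matrix (Fin n) (Fin n) ℂ) :
    ∃ Q : Matrix (Fin n) (Fin n) ℂ, Qᴴ * Q = 1 ∧
      ∀ p q : Fin n, q < p → (M * Q) p q = 0 := by
  classical
  haveI : WellFoundedLT (Fin n) := inferInstance
  let f : Fin n → EuclideanSpace ℂ (Fin n) := fun j => WithLp.toLp 2 (fun k => starRingEnd ℂ (M (Fin.rev j) k))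
  let B : OrthonormalBasis (Fin n) ℂ (EuclideanSpace ℂ (Fin n)) :=
    @InnerProductSpace.gramSchmidtOrthonormalBasis ℂ (EuclideanSpace ℂ (Fin n)) _ _ _ (Fin n) _ _
      this _ _ (euclid_finrank n) f
  refine ⟨Matrix.of fun k q => B (Fin.rev q) k, ?_, ?_⟩
  · ext p q
    have horth := orthonormal_iff_ite.mp B.orthonormal (Fin.rev p) (Fin.rev q)
    rw [PiLp.inner_apply] at horth
    simp only [RCLike.inner_apply] at horth
    simp only [Fin.rev_inj] at horth
    simpa [Matrix.mul_apply, Matrix.conjTranspose_apply, Matrix.one_apply, mul_comm] using horth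
  · intro p q hqp
    have hlt : Fin.rev p < Fin.rev q := by
      rw [Fin.rev_lt_rev]; exact hqp
    have h := @InnerProductSpace.gramSchmidtOrthonormalBasis_inv_triangular ℂ (EuclideanSpace ℂ (Fin n)) _ _ _
      (Fin n) _ _ this _ _ (euclid_finrank n) f (Fin.rev p) (Fin.rev q) hlt
    rw [PiLp.inner_apply] at h
    simp only [RCLike.inner_apply, f, Fin.rev_rev] at h
    have h' : (starRingEnd ℂ) (∑ k, (starRingEnd ℂ) (B (Fin.rev q) k) * (starRingEnd ℂ) (M p k)) = 0 := by
      rw [show (∑ k, (starRingEnd ℂ) (B (Fin.rev q) k) * (starRingEnd ℂ) (M p k)) = 0 from by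
        rw [← h]; exact Finset.sum_congr rfl fun k _ => mul_comm _ _]; simp
    rw [map_sum] at h'
    rw [Matrix.mul_apply]
    rw [← h']
    refine Finset.sum_congr rfl fun k _ => ?_
    simp only [Matrix.of_apply, _root_.map_mul, Complex.conj_conj]
    ring



lemma exists_leaf {V : Type} [Fintype V] (G : SimpleGraph V) (hG : G.IsAcyclic)
    {a b : V} (hab : G.Adj a b) :
    ∃ v w : V, G.Adj v w ∧ ∀ x, G.Adj v x → x = w := by
  classical
  set P : ℕ → Prop := fun k => ∃ (u v : V) (p : G.Walk u v), p.IsPath ∧ p.length = k with hP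
  have hP1 : P 1 := by
    refine ⟨a, b, Walk.cons hab Walk.nil, ?_, rfl⟩
    rw [Walk.cons_isPath_iff]
    exact ⟨Walk.IsPath.nil, by simp [hab.ne]⟩
  have hcard : 1 ≤ Fintype.card V := Fintype.card_pos_iff.mpr ⟨a⟩
  set k := Nat.findGreatest P (Fintype.card V) with hk
  have hPk : P k := Nat.findGreatest_spec hcard hP1
  have hmax : ∀ m, P m → m ≤ k := by
    intro m hm
    obtain ⟨u, v, p, hp, hlen⟩ := hm
    exact Nat.le_findGreatest (hlen ▸ hp.length_lt.le) ⟨u, v, p, hp, hlen⟩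
  have hk1 : 1 ≤ k := hmax 1 hP1
  obtain ⟨u, v, p, hp, hlen⟩ := hPk
  -- work with the reverse walk, from v
  have hrp : p.reverse.IsPath := hp.reverse
  have hrlen : p.reverse.length = k := by rw [Walk.length_reverse, hlen]
  revert hrp hrlen
  generalize p.reverse = r
  intro hrp hrlen
  cases r with
  | nil => simp at hrlen; omega
  | @cons _ y _ h' r' =>
    rw [Walk.cons_isPath_iff] at hrp
    obtain ⟨hr', hvr'⟩ := hrp
    refine ⟨v, y, h', ?_⟩
    intro x hvx
    -- x must be in the support of the walk, else we could extend
    have hxsup : x ∈ (Walk.cons h' r').support := by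
      by_contra hxs
      have hq : (Walk.cons hvx.symm (Walk.cons h' r')).IsPath := by
        rw [Walk.cons_isPath_iff]
        exact ⟨by rw [Walk.cons_isPath_iff]; exact ⟨hr', hvr'⟩, hxs⟩
      have := hmax (k + 1) ⟨x, u, _, hq, by rw [Walk.length_cons, hrlen]⟩
      omega
    have hxv : x ≠ v := hvx.ne'
    set t := (Walk.cons h' r').takeUntil x hxsup with ht
    have htp : t.IsPath := ((Walk.cons_isPath_iff h' r').mpr ⟨hr', hvr'⟩).takeUntil hxsup
    have hedge : s(x, v) ∈ t.edges := by
      by_contra hne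
      exact hG _ (SimpleGraph.Path.cons_isCycle ⟨t, htp⟩ hvx.symm hne)
    have hedge' : s(x, v) ∈ (Walk.cons h' r').edges := Walk.edges_takeUntil_subset _ hxsup hedge
    rw [Walk.edges_cons, List.mem_cons] at hedge'
    rcases hedge' with heq | hmem
    · rw [Sym2.eq_iff] at heq
      rcases heq with ⟨h1, h2⟩ | ⟨h1, h2⟩
      · exact absurd h1 hxv
      · exact h1
    · exact absurd (Walk.snd_mem_support_of_mem_edges r' hmem) hvr'

theorem forest_aux (n : ℕ) : ∀ (N : ℕ) (V : Type) [Fintype V]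
    (E : V → V → Type) [∀ i j, Fintype (E i j)]
    (A : ∀ i j, E i j → Matrix (Fin n) (Fin n) ℂ),
    (∀ i, IsEmpty (E i i)) →
    (∀ i j : V, i ≠ j → Subsingleton (E i j ⊕ E j i)) →
    SimpleGraph.IsAcyclic
      { Adj := fun i j => i ≠ j ∧ (Nonempty (E i j) ∨ Nonempty (E j i)),
        symm := ⟨fun i j h => ⟨h.1.symm, h.2.symm⟩⟩,
        loopless := ⟨fun i h => h.1 rfl⟩ } →
    Fintype.card ((i : V) × (j : V) × E i j) ≤ N →
    ∃ U : V → Matrix (Fin n) (Fin n) ℂ,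
      (∀ v, (U v)ᴴ * U v = 1) ∧
      ∀ (i j : V) (e : E i j), ∀ p q : Fin n, q < p →
        ((U j)ᴴ * A i j e * U i) p q = 0 := by
  intro N
  induction N with
  | zero =>
    intro V _ E _ A hloop _ _ hcard
    refine ⟨fun _ => 1, fun v => by simp, ?_⟩
    intro i j e p q hqp
    have : 0 < Fintype.card ((i : V) × (j : V) × E i j) :=
      Fintype.card_pos_iff.mpr ⟨⟨i, j, e⟩⟩
    omega
  | succ N ih =>
    intro V _ E _ A hloop hsimp hacyc hcard
    classical
    by_cases hE : ∀ i j, IsEmpty (E i j)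
    · refine ⟨fun _ => 1, fun v => by simp, ?_⟩
      intro i j e
      exact ((hE i j).false e).elim
    · push_neg at hE
      obtain ⟨a, b, hab⟩ := hE
      obtain ⟨e0⟩ := hab
      set G : SimpleGraph V :=
        { Adj := fun i j => i ≠ j ∧ (Nonempty (E i j) ∨ Nonempty (E j i)),
          symm := ⟨fun i j h => ⟨h.1.symm, h.2.symm⟩⟩,
          loopless := ⟨fun i h => h.1 rfl⟩ } with hG
      have hne : a ≠ b := by rintro rfl; exact (hloop a).false e0
      have hadj : G.Adj a b := ⟨hne, Or.inl ⟨e0⟩⟩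
      obtain ⟨v, w, hvw, hleaf⟩ := exists_leaf G hacyc hadj
      -- the reduced edge family with all edges at v removed
      set E' : V → V → Type := fun i j => PLift (i ≠ v) × PLift (j ≠ v) × E i j with hE'
      letI : ∀ i j, Fintype (E' i j) := fun i j => by unfold E'; infer_instance
      set A' : ∀ i j, E' i j → Matrix (Fin n) (Fin n) ℂ := fun i j e => A i j e.2.2 with hA'
      have hloop' : ∀ i, IsEmpty (E' i i) := fun i => ⟨fun e => (hloop i).false e.2.2⟩
      have hsimp' : ∀ i j : V, i ≠ j → Subsingleton (E' i j ⊕ E' j i) := by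
        intro i j hij
        haveI := hsimp i j hij
        constructor
        rintro (⟨⟨hx1⟩, ⟨hx2⟩, ex⟩ | ⟨⟨hx1⟩, ⟨hx2⟩, ex⟩) (⟨⟨hy1⟩, ⟨hy2⟩, ey⟩ | ⟨⟨hy1⟩, ⟨hy2⟩, ey⟩)
        · have hxy : ex = ey :=
            Sum.inl.inj (Subsingleton.elim (Sum.inl ex : E i j ⊕ E j i) (Sum.inl ey))
          subst hxy; rfl
        · exact absurd (Subsingleton.elim (Sum.inl ex : E i j ⊕ E j i) (Sum.inr ey)) (by simp)
        · exact absurd (Subsingleton.elim (Sum.inl ey : E i j ⊕ E j i) (Sum.inr ex)) (by simp)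
        · have hxy : ex = ey :=
            Sum.inr.inj (Subsingleton.elim (Sum.inr ex : E i j ⊕ E j i) (Sum.inr ey))
          subst hxy; rfl
      set G' : SimpleGraph V :=
        { Adj := fun i j => i ≠ j ∧ (Nonempty (E' i j) ∨ Nonempty (E' j i)),
          symm := ⟨fun i j h => ⟨h.1.symm, h.2.symm⟩⟩,
          loopless := ⟨fun i h => h.1 rfl⟩ } with hG'
      have hle : G' ≤ G := by
        intro i j h
        exact ⟨h.1, h.2.imp (fun ⟨e⟩ => ⟨e.2.2⟩) (fun ⟨e⟩ => ⟨e.2.2⟩)⟩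
      have hacyc' : G'.IsAcyclic := fun x c hc => hacyc (c.mapLe hle) (hc.mapLe hle)
      -- cardinality decreases
      have hcard' : Fintype.card ((i : V) × (j : V) × E' i j) ≤ N := by
        set φ : ((i : V) × (j : V) × E' i j) → ((i : V) × (j : V) × E i j) :=
          fun s => ⟨s.1, s.2.1, s.2.2.2.2⟩ with hφ
        have hinj : Function.Injective φ := by
          rintro ⟨i, j, ⟨h1, h2, e⟩⟩ ⟨i', j', ⟨h1', h2', e'⟩⟩ h
          simp only [hφ, Sigma.mk.inj_iff] at h
          obtain ⟨rfl, h⟩ := h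
          rw [heq_eq_eq, Sigma.mk.inj_iff] at h
          obtain ⟨rfl, h⟩ := h
          rw [heq_eq_eq] at h
          subst h
          have e1 : h1 = h1' := Subsingleton.elim _ _
          have e2 : h2 = h2' := Subsingleton.elim _ _
          subst e1; subst e2
          rfl
        have hnotmem : ∃ z : ((i : V) × (j : V) × E i j), z ∉ Set.range φ := by
          have hvw2 : Nonempty (E v w) ∨ Nonempty (E w v) := hvw.2
          rcases hvw2 with h1 | h1 <;> obtain ⟨e1⟩ := h1
          · refine ⟨⟨v, w, e1⟩, ?_⟩
            rintro ⟨⟨i, j, ⟨h1, h2, e⟩⟩, h⟩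
            exact h1.down (congrArg Sigma.fst h)
          · refine ⟨⟨w, v, e1⟩, ?_⟩
            rintro ⟨⟨i, j, ⟨h1, h2, e⟩⟩, h⟩
            have hj : j = v := by
              have := congrArg (fun z => z.2.1) h
              simpa [hφ] using this
            exact h2.down hj
        obtain ⟨z, hz⟩ := hnotmem
        have := Fintype.card_lt_of_injective_of_notMem φ hinj hz
        omega
      obtain ⟨U', hU'unit, hU'tri⟩ := ih V E' A' hloop' hsimp' hacyc' hcard'
      have hwv : w ≠ v := hvw.1.symm
      -- choose the unitary at v depending on the direction of the unique edge at v
      have hQ : ∃ Q : Matrix (Fin n) (Fin n) ℂ, Qᴴ * Q = 1 ∧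
          (∀ e : E v w, ∀ p q : Fin n, q < p → ((U' w)ᴴ * A v w e * Q) p q = 0) ∧
          (∀ e : E w v, ∀ p q : Fin n, q < p → (Qᴴ * A w v e * U' w) p q = 0) := by
        haveI := hsimp v w hvw.1
        have hvw2 : Nonempty (E v w) ∨ Nonempty (E w v) := hvw.2
        rcases hvw2 with hone | hone
        all_goals obtain ⟨e1⟩ := hone
        · obtain ⟨Q, hQu, hQt⟩ := qr_right n ((U' w)ᴴ * A v w e1)
          refine ⟨Q, hQu, fun e p q hqp => ?_, fun e p q hqp => ?_⟩
          · have : e = e1 := by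
              have := Subsingleton.elim (Sum.inl e : E v w ⊕ E w v) (Sum.inl e1)
              exact Sum.inl.inj this
            subst this
            exact hQt p q hqp
          · exact absurd (Subsingleton.elim (Sum.inl e1 : E v w ⊕ E w v) (Sum.inr e)) (by simp)
        · obtain ⟨Q, hQu, hQt⟩ := qr_left n (A w v e1 * U' w)
          refine ⟨Q, hQu, fun e p q hqp => ?_, fun e p q hqp => ?_⟩
          · exact absurd (Subsingleton.elim (Sum.inl e : E v w ⊕ E w v) (Sum.inr e1)) (by simp)
          · have : e = e1 := by
              have := Subsingleton.elim (Sum.inr e : E v w ⊕ E w v) (Sum.inr e1)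
              exact Sum.inr.inj this
            subst this
            rw [Matrix.mul_assoc]
            exact hQt p q hqp
      obtain ⟨Q, hQu, hQvw, hQwv⟩ := hQ
      refine ⟨fun x => if x = v then Q else U' x, ?_, ?_⟩
      · intro x
        by_cases hx : x = v
        · simp [hx, hQu]
        · simp [hx, hU'unit x]
      · intro i j e p q hqp
        by_cases hi : i = v
        · subst hi
          by_cases hj : j = i
          · subst hj
            exact ((hloop j).false e).elim
          · have hji : j = w := hleaf j ⟨fun h => hj h.symm, Or.inl ⟨e⟩⟩
            subst hji
            simpa [hvw.1.symm, hwv] using hQvw e p q hqp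
        · by_cases hj : j = v
          · subst hj
            have hiw : i = w := hleaf i ⟨fun h => hi h.symm, Or.inr ⟨e⟩⟩
            subst hiw
            simpa [hwv] using hQwv e p q hqp
          · have := hU'tri i j ⟨⟨hi⟩, ⟨hj⟩, e⟩ p q hqp
            simpa [hi, hj] using this

/-- Forest case of the simultaneous unitary triangularization theorem: the complex matrices
of linear maps associated with a quiver whose underlying undirected simple graph is acyclic
can be simultaneously reduced to upper triangular form by unitary changes of bases. -/
theorem complex_forest_schur (n : ℕ) (V : Type) [Fintype V]
    (E : V → V → Type) [∀ i j, Fintype (E i j)]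
    (A : ∀ i j, E i j → Matrix (Fin n) (Fin n) ℂ)
    (hloopless : ∀ i, IsEmpty (E i i))
    (hsimple : ∀ i j : V, i ≠ j → Subsingleton (E i j ⊕ E j i))
    (hacyclic : SimpleGraph.IsAcyclic
      { Adj := fun i j => i ≠ j ∧ (Nonempty (E i j) ∨ Nonempty (E j i)),
        symm := ⟨fun i j h => ⟨h.1.symm, h.2.symm⟩⟩,
        loopless := ⟨fun i h => h.1 rfl⟩ }) :
    ∃ U : V → Matrix (Fin n) (Fin n) ℂ,
      (∀ v, (U v)ᴴ * U v = 1) ∧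
      ∀ (i j : V) (e : E i j), ∀ p q : Fin n, q < p →
        ((U j)ᴴ * A i j e * U i) p q = 0 := by
  exact forest_aux n (Fintype.card ((i : V) × (j : V) × E i j)) V E A
    hloopless hsimple hacyclic le_rfl
end

section
/- Let V be a finite type of vertices, and for every ordered pair of vertices i, j let E i j be a finite type of directed edges from i to j, with a real n×n matrix A e assigned to each edge e ∈ E i j. Assume: (1) there are no loops, i.e., E i i is empty for every i; (2) between any unordered pair of distinct vertices there is at most one edge, i.e., the sum type (E i j) ⊕ (E j i) is a subsingleton for all i ≠ j; (3) the simple graph G on V with G.Adj i j ↔ (i ≠ j ∧ (Nonempty (E i j) ∨ Nonempty (E j i))) is acyclic. Then there exists a family of real orthogonal n×n matrices Q v, one for each vertex v, such that for every edge e ∈ E i j the matrix (Q j)ᵀ (A e) (Q i) is upper triangular. -/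
/-!
Root every component of the forest and orient each edge from parent to child. Walking down
from the roots, the orthogonal matrix of a child only has to triangularize the single edge to
its parent, given the matrix already chosen at the parent: for an edge `parent → child` this
is a QR decomposition of `A e * Q parent`, for an edge `child → parent` an RQ decomposition
of `(Q parent)ᵀ * A e`. Both come from Gram–Schmidt, RQ being QR for the reversed order.
-/

open Matrix

namespace Matrix

variable {ι : Type*} [Fintype ι] [DecidableEq ι] [LinearOrder ι]

theorem exists_orthogonal_transpose_mul_isUpperTriangular [LocallyFiniteOrderBot ι]
    (C : Matrix ι ι ℝ) : ∃ Q : Matrix ι ι ℝ, Qᵀ * Q = 1 ∧ (Qᵀ * C).IsUpperTriangular := by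
  let e := EuclideanSpace.basisFun ι ℝ
  let f : ι → EuclideanSpace ℝ ι := fun j => WithLp.toLp 2 fun k => C k j
  have hC : e.toBasis.toMatrix f = C := rfl
  let b := InnerProductSpace.gramSchmidtOrthonormalBasis finrank_euclideanSpace f
  refine ⟨(b.toBasis.toMatrix e)ᵀ, ?_, ?_⟩
  · rw [transpose_transpose, ← conjTranspose_eq_transpose_of_trivial]
    exact b.toMatrix_orthonormalBasis_self_mul_conjTranspose e
  · rw [transpose_transpose, ← hC, ← e.coe_toBasis, Module.Basis.toMatrix_mul_toMatrix]
    exact InnerProductSpace.gramSchmidtOrthonormalBasis_inv_isUpperTriangular _ f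

theorem exists_orthogonal_mul_isUpperTriangular [LocallyFiniteOrderTop ι] (B : Matrix ι ι ℝ) :
    ∃ Q : Matrix ι ι ℝ, Qᵀ * Q = 1 ∧ (B * Q).IsUpperTriangular := by
  obtain ⟨Q, hQ, hT⟩ := exists_orthogonal_transpose_mul_isUpperTriangular (ι := ιᵒᵈ) Bᵀ
  refine ⟨Q, hQ, ?_⟩
  have := hT.transpose
  rwa [transpose_mul, transpose_transpose] at this

theorem exists_orthogonal_isUpperTriangular_of_subsingleton [LocallyFiniteOrderBot ι]
    [LocallyFiniteOrderTop ι] {E₁ E₂ : Type*} [Subsingleton (E₁ ⊕ E₂)]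
    (A₁ : E₁ → Matrix ι ι ℝ) (A₂ : E₂ → Matrix ι ι ℝ) (M : Matrix ι ι ℝ) :
    ∃ N : Matrix ι ι ℝ, Nᵀ * N = 1 ∧ (∀ e, (Nᵀ * A₁ e * M).IsUpperTriangular) ∧
      ∀ e, (Mᵀ * A₂ e * N).IsUpperTriangular := by
  have hE : ∀ x y : E₁ ⊕ E₂, x = y := Subsingleton.elim
  rcases isEmpty_or_nonempty (E₁ ⊕ E₂) with h | ⟨e | e⟩
  · exact ⟨1, by simp, fun e => (h.false (.inl e)).elim, fun e => (h.false (.inr e)).elim⟩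
  · obtain ⟨N, hN, hT⟩ := exists_orthogonal_transpose_mul_isUpperTriangular (A₁ e * M)
    refine ⟨N, hN, fun e' => ?_, fun e' => (nomatch hE (.inl e) (.inr e'))⟩
    obtain rfl := Sum.inl_injective (hE (.inl e') (.inl e))
    rwa [Matrix.mul_assoc]
  · obtain ⟨N, hN, hT⟩ := exists_orthogonal_mul_isUpperTriangular (Mᵀ * A₂ e)
    refine ⟨N, hN, fun e' => (nomatch hE (.inr e) (.inl e')), fun e' => ?_⟩
    obtain rfl := Sum.inr_injective (hE (.inr e') (.inr e))
    exact hT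

end Matrix

namespace SimpleGraph

variable {V : Type*} {G : SimpleGraph V}

theorem IsAcyclic.eq_concat_or_eq_concat (hG : G.IsAcyclic) {r i j : V} {p : G.Walk r i}
    {q : G.Walk r j} (hp : p.IsPath) (hq : q.IsPath) (hadj : G.Adj i j) :
    q = p.concat hadj ∨ p = q.concat hadj.symm := by
  by_cases hi : i ∈ q.support
  · exact .inl (hG.path_concat hp hq hadj hi)
  · exact .inr (hG.path_concat hq hp hadj.symm
      (hG.mem_support_of_ne_mem_support_of_adj_of_isPath hp hq hadj hi))

/-- The equation `r = r'` lets this apply to paths chosen from the root of each vertex's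
component: the roots of adjacent vertices agree only propositionally. -/
theorem IsAcyclic.penultimate_eq_of_adj (hG : G.IsAcyclic) {r r' i j : V} (hr : r = r')
    {p : G.Walk r i} {q : G.Walk r' j} (hp : p.IsPath) (hq : q.IsPath) (hadj : G.Adj i j) :
    (q.penultimate = i ∧ p.length < q.length) ∨ (p.penultimate = j ∧ q.length < p.length) := by
  subst hr
  rcases hG.eq_concat_or_eq_concat hp hq hadj with rfl | rfl <;> simp [Walk.penultimate_concat]

theorem IsAcyclic.exists_parent_rank (hG : G.IsAcyclic) :
    ∃ (rk : V → ℕ) (par : V → V), ∀ ⦃i j⦄, G.Adj i j →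
      (par j = i ∧ rk i < rk j) ∨ (par i = j ∧ rk j < rk i) := by
  have hreach (v : V) : G.Reachable (G.connectedComponentMk v).out v :=
    ConnectedComponent.exact (G.connectedComponentMk v).out_eq
  choose P hP using fun v => (hreach v).exists_isPath
  refine ⟨fun v => (P v).length, fun v => (P v).penultimate, fun i j hadj => ?_⟩
  have hr : (G.connectedComponentMk i).out = (G.connectedComponentMk j).out := by
    rw [ConnectedComponent.sound hadj.reachable]
  exact hG.penultimate_eq_of_adj hr (hP i) (hP j) hadj

end SimpleGraph

theorem exists_rel_parent {V α : Type*} [Nonempty α] (rk : V → ℕ) (par : V → V)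
    (R : V → α → α → Prop) (hR : ∀ v a, ∃ b, R v a b) :
    ∃ Q : V → α, ∀ v, rk (par v) < rk v → R v (Q (par v)) (Q v) := by
  choose step hstep using hR
  let Q : V → α := (measure rk).wf.fix fun v Q' =>
    if h : rk (par v) < rk v then step v (Q' (par v) h) else Classical.arbitrary α
  have hQ (v : V) (h : rk (par v) < rk v) : Q v = step v (Q (par v)) :=
    (WellFounded.fix_eq _ _ v).trans (dif_pos h)
  exact ⟨Q, fun v h => hQ v h ▸ hstep v _⟩

theorem real_forest_schur_general (n : ℕ) (V : Type)
    (E : V → V → Type)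
    (A : ∀ i j, E i j → Matrix (Fin n) (Fin n) ℝ)
    (hloopless : ∀ i, IsEmpty (E i i))
    (hsimple : ∀ i j : V, i ≠ j → Subsingleton (E i j ⊕ E j i))
    (hacyclic : SimpleGraph.IsAcyclic
      { Adj := fun i j => i ≠ j ∧ (Nonempty (E i j) ∨ Nonempty (E j i)),
        symm := ⟨fun i j h => ⟨h.1.symm, h.2.symm⟩⟩,
        loopless := ⟨fun i h => h.1 rfl⟩ }) :
    ∃ Q : V → Matrix (Fin n) (Fin n) ℝ,
      (∀ v, (Q v)ᵀ * Q v = 1) ∧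
      ∀ (i j : V) (e : E i j), ∀ p q : Fin n, q < p →
        ((Q j)ᵀ * A i j e * Q i) p q = 0 := by
  obtain ⟨rk, par, hpar⟩ := hacyclic.exists_parent_rank
  have hsub (v : V) : Subsingleton (E (par v) v ⊕ E v (par v)) := by
    by_cases hv : par v = v
    · have := hloopless v
      rw [hv]
      infer_instance
    · exact hsimple _ _ hv
  have : Nonempty {Q : Matrix (Fin n) (Fin n) ℝ // Qᵀ * Q = 1} := ⟨⟨1, by simp⟩⟩
  obtain ⟨Q, hQ⟩ := exists_rel_parent rk par
    (fun v (M N : {Q : Matrix (Fin n) (Fin n) ℝ // Qᵀ * Q = 1}) =>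
      (∀ e, (N.1ᵀ * A (par v) v e * M.1).IsUpperTriangular) ∧
        ∀ e, (M.1ᵀ * A v (par v) e * N.1).IsUpperTriangular)
    fun v M =>
      have := hsub v
      let ⟨N, hN, hT⟩ := exists_orthogonal_isUpperTriangular_of_subsingleton
        (A (par v) v) (A v (par v)) M.1
      ⟨⟨N, hN⟩, hT⟩
  refine ⟨fun v => (Q v).1, fun v => (Q v).2, fun i j e p q hpq => ?_⟩
  have hadj : i ≠ j ∧ (Nonempty (E i j) ∨ Nonempty (E j i)) :=
    ⟨fun h : i = j => (hloopless j).false (h ▸ e), .inl ⟨e⟩⟩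
  rcases hpar hadj with ⟨rfl, hlt⟩ | ⟨rfl, hlt⟩
  · exact (hQ j hlt).1 e hpq
  · exact (hQ i hlt).2 e hpq

/-- Forest case of the simultaneous orthogonal triangularization theorem: the real matrices
of linear maps associated with a quiver whose underlying undirected simple graph is acyclic
can be simultaneously reduced to upper triangular form by orthogonal changes of bases. -/
theorem real_forest_schur (n : ℕ) (V : Type) [Fintype V]
    (E : V → V → Type) [∀ i j, Fintype (E i j)]
    (A : ∀ i j, E i j → Matrix (Fin n) (Fin n) ℝ)
    (hloopless : ∀ i, IsEmpty (E i i))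
    (hsimple : ∀ i j : V, i ≠ j → Subsingleton (E i j ⊕ E j i))
    (hacyclic : SimpleGraph.IsAcyclic
      { Adj := fun i j => i ≠ j ∧ (Nonempty (E i j) ∨ Nonempty (E j i)),
        symm := ⟨fun i j h => ⟨h.1.symm, h.2.symm⟩⟩,
        loopless := ⟨fun i h => h.1 rfl⟩ }) :
    ∃ Q : V → Matrix (Fin n) (Fin n) ℝ,
      (∀ v, (Q v)ᵀ * Q v = 1) ∧
      ∀ (i j : V) (e : E i j), ∀ p q : Fin n, q < p →
        ((Q j)ᵀ * A i j e * Q i) p q = 0 :=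
  real_forest_schur_general n V E A hloopless hsimple hacyclic
end

section
/- Let A be the real 3×3 matrix !![0, 1, 0; 0, 0, 1; 0, 0, 0] (the nilpotent Jordan block of size 3). For every real orthogonal 3×3 matrix Q, it is not the case that both Qᵀ A Q and Qᵀ Aᵀ Q are quasi-upper-triangular. -/
open Matrix

lemma sq_zero_of_cube (d e f g : ℝ)
    (h11 : d*(d*d+e*f) + e*(f*d+g*f) = 0)
    (h12 : d*(d*e+e*g) + e*(e*f+g*g) = 0)
    (h22 : f*(d*e+e*g) + g*(e*f+g*g) = 0) :
    d*d+e*f = 0 ∧ d*e+e*g = 0 ∧ f*d+g*f = 0 ∧ e*f+g*g = 0 := by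
  have hD3 : (d*g - e*f)^3 = 0 := by
    linear_combination (f*(d*e+e*g) + g*(e*f+g*g))*h11 - (f*(d*d+e*f) + g*(f*d+g*f))*h12
  have hD : d*g - e*f = 0 := pow_eq_zero_iff (by norm_num) |>.mp hD3
  have ht3 : (d+g)^3 = 0 := by linear_combination h11 + h22 + 3*(d+g)*hD
  have ht : d+g = 0 := pow_eq_zero_iff (by norm_num) |>.mp ht3
  exact ⟨by linear_combination d*ht - hD, by linear_combination e*ht,
    by linear_combination f*ht, by linear_combination g*ht - hD⟩

/-- For the nilpotent Jordan block `A` of size 3, no orthogonal change of basis makes both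
`Qᵀ A Q` and `Qᵀ Aᵀ Q` quasi-upper-triangular. -/
theorem no_simultaneous_quasi_triangularization_jordan3
    (Q : Matrix (Fin 3) (Fin 3) ℝ) (hQ : Qᵀ * Q = 1) :
    ¬ (QuasiUpperTriangular (Qᵀ * (!![0, 1, 0; 0, 0, 1; 0, 0, 0] : Matrix (Fin 3) (Fin 3) ℝ) * Q) ∧
       QuasiUpperTriangular (Qᵀ * (!![0, 1, 0; 0, 0, 1; 0, 0, 0] : Matrix (Fin 3) (Fin 3) ℝ)ᵀ * Q)) := by
  rintro ⟨⟨h1z, h1c⟩, ⟨h2z, h2c⟩⟩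
  set A : Matrix (Fin 3) (Fin 3) ℝ := !![0, 1, 0; 0, 0, 1; 0, 0, 0] with hAdef
  have hQQ : Q * Qᵀ = 1 := mul_eq_one_comm.mp hQ
  set B : Matrix (Fin 3) (Fin 3) ℝ := Qᵀ * A * Q with hBdef
  have hT : Qᵀ * Aᵀ * Q = Bᵀ := by
    rw [hBdef, Matrix.transpose_mul, Matrix.transpose_mul, Matrix.transpose_transpose,
      Matrix.mul_assoc]
  rw [hT] at h2z h2c
  -- the two "no consecutive subdiagonal entries" conditions
  have hc1 : B 1 0 = 0 ∨ B 2 1 = 0 := by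
    by_contra hcon
    push_neg at hcon
    exact h1c ⟨0, by norm_num, by norm_num, hcon.1, hcon.2⟩
  have hc2 : B 0 1 = 0 ∨ B 1 2 = 0 := by
    by_contra hcon
    push_neg at hcon
    exact h2c ⟨0, by norm_num, by norm_num, hcon.1, hcon.2⟩
  -- the tridiagonal zeros
  have h20 : B 2 0 = 0 := h1z 2 0 (by norm_num)
  have h02 : B 0 2 = 0 := h2z 2 0 (by norm_num)
  -- B is conjugate to A
  have hBB : B * B = Qᵀ * (A * A) * Q := by
    calc Qᵀ*A*Q*(Qᵀ*A*Q) = Qᵀ*A*(Q*Qᵀ)*(A*Q) := by simp only [Matrix.mul_assoc]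
    _ = Qᵀ*A*(A*Q) := by rw [hQQ, Matrix.mul_one]
    _ = Qᵀ*(A*A)*Q := by simp only [Matrix.mul_assoc]
  have hA3 : A * A * A = 0 := by
    rw [hAdef]
    norm_num [Matrix.mul_fin_three]
    ext i j
    fin_cases i <;> fin_cases j <;> rfl
  have hB3 : B * B * B = 0 := by
    rw [hBB]
    calc Qᵀ*(A*A)*Q*(Qᵀ*A*Q) = Qᵀ*(A*A)*(Q*Qᵀ)*(A*Q) := by simp only [Matrix.mul_assoc]
    _ = Qᵀ*(A*A)*(A*Q) := by rw [hQQ, Matrix.mul_one]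
    _ = Qᵀ*(A*A*A)*Q := by simp only [Matrix.mul_assoc]
    _ = 0 := by rw [hA3]; simp
  -- extract scalar cubic equations
  have E00 := congrFun (congrFun hB3 0) 0
  have E01 := congrFun (congrFun hB3 0) 1
  have E10 := congrFun (congrFun hB3 1) 0
  have E11 := congrFun (congrFun hB3 1) 1
  have E12 := congrFun (congrFun hB3 1) 2
  have E21 := congrFun (congrFun hB3 2) 1
  have E22 := congrFun (congrFun hB3 2) 2
  simp only [Matrix.mul_apply, Fin.sum_univ_three, Matrix.zero_apply, h02, h20,
    mul_zero, zero_mul, add_zero, zero_add] at E00 E01 E10 E11 E12 E21 E22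
  -- in each case, show B * B = 0
  have hB2 : B * B = 0 := by
    rcases hc2 with hb | he <;> rcases hc1 with hc | hf
    · -- B 0 1 = 0, B 1 0 = 0
      simp only [hb, hc, mul_zero, zero_mul, add_zero, zero_add] at E00 E11 E12 E21 E22
      have ha : B 0 0 = 0 := by
        refine pow_eq_zero_iff (n := 3) (by norm_num) |>.mp ?_
        linear_combination E00
      obtain ⟨k1, k2, k3, k4⟩ := sq_zero_of_cube (B 1 1) (B 1 2) (B 2 1) (B 2 2)
        (by linear_combination E11) (by linear_combination E12) (by linear_combination E22)
      ext i j
      fin_cases i <;> fin_cases j <;>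
        simp only [Fin.zero_eta, Fin.mk_one, show ((⟨2, by omega⟩ : Fin 3)) = 2 from rfl,
          Matrix.mul_apply, Fin.sum_univ_three, Matrix.zero_apply, h02, h20,
          ha, hb, hc, mul_zero, zero_mul, add_zero, zero_add] <;>
      linarith [k1, k2, k3, k4]
    · -- B 0 1 = 0, B 2 1 = 0
      simp only [hb, hf, mul_zero, zero_mul, add_zero, zero_add] at E00 E11 E22
      have ha : B 0 0 = 0 := by
        refine pow_eq_zero_iff (n := 3) (by norm_num) |>.mp ?_
        linear_combination E00
      have hg : B 2 2 = 0 := by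
        refine pow_eq_zero_iff (n := 3) (by norm_num) |>.mp ?_
        linear_combination E22
      have hd : B 1 1 = 0 := by
        refine pow_eq_zero_iff (n := 3) (by norm_num) |>.mp ?_
        linear_combination E11
      ext i j
      fin_cases i <;> fin_cases j <;>
        simp only [Fin.zero_eta, Fin.mk_one, show ((⟨2, by omega⟩ : Fin 3)) = 2 from rfl,
          Matrix.mul_apply, Fin.sum_univ_three, Matrix.zero_apply, h02, h20,
          ha, hb, hf, hg, hd, mul_zero, zero_mul, add_zero, zero_add]
    · -- B 1 2 = 0, B 1 0 = 0
      simp only [he, hc, mul_zero, zero_mul, add_zero, zero_add] at E00 E11 E22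
      have ha : B 0 0 = 0 := by
        refine pow_eq_zero_iff (n := 3) (by norm_num) |>.mp ?_
        linear_combination E00
      have hg : B 2 2 = 0 := by
        refine pow_eq_zero_iff (n := 3) (by norm_num) |>.mp ?_
        linear_combination E22
      have hd : B 1 1 = 0 := by
        refine pow_eq_zero_iff (n := 3) (by norm_num) |>.mp ?_
        linear_combination E11
      ext i j
      fin_cases i <;> fin_cases j <;>
        simp only [Fin.zero_eta, Fin.mk_one, show ((⟨2, by omega⟩ : Fin 3)) = 2 from rfl,
          Matrix.mul_apply, Fin.sum_univ_three, Matrix.zero_apply, h02, h20,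
          ha, he, hc, hg, hd, mul_zero, zero_mul, add_zero, zero_add]
    · -- B 1 2 = 0, B 2 1 = 0
      simp only [he, hf, mul_zero, zero_mul, add_zero, zero_add] at E00 E01 E10 E11 E22
      have hg : B 2 2 = 0 := by
        refine pow_eq_zero_iff (n := 3) (by norm_num) |>.mp ?_
        linear_combination E22
      obtain ⟨k1, k2, k3, k4⟩ := sq_zero_of_cube (B 0 0) (B 0 1) (B 1 0) (B 1 1)
        (by linear_combination E00) (by linear_combination E01) (by linear_combination E11)
      ext i j
      fin_cases i <;> fin_cases j <;>
        simp only [Fin.zero_eta, Fin.mk_one, show ((⟨2, by omega⟩ : Fin 3)) = 2 from rfl,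
          Matrix.mul_apply, Fin.sum_univ_three, Matrix.zero_apply, h02, h20,
          he, hf, hg, mul_zero, zero_mul, add_zero, zero_add] <;>
      linarith [k1, k2, k3, k4]
  -- conjugate back: A * A = 0, contradiction
  have hAA : A * A = 0 := by
    have h0 : Qᵀ * (A * A) * Q = 0 := by rw [← hBB, hB2]
    calc A * A = (Q * Qᵀ) * (A*A) * (Q * Qᵀ) := by rw [hQQ, Matrix.one_mul, Matrix.mul_one]
    _ = Q * (Qᵀ * (A*A) * Q) * Qᵀ := by simp only [Matrix.mul_assoc]
    _ = 0 := by rw [h0]; simp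
  have := congrFun (congrFun hAA 0) 2
  simp [hAdef, Matrix.mul_apply, Fin.sum_univ_three] at this
end

section
/- Let A₀ = !![0, 1; 0, 0], A₁ = 1 (the identity), and A₂ = !![0, 0; 1, 0] be complex 2×2 matrices. For all unitary 2×2 matrices U₁ and U₂, it is not the case that U₂ᴴ A₀ U₁, U₂ᴴ A₁ U₁, and U₂ᴴ A₂ U₁ are all upper triangular. -/
open Matrix

/-- The matrix coefficients `A₀ = !![0,1;0,0]`, `A₁ = 1`, `A₂ = !![0,0;1,0]` of a quadratic
matrix polynomial cannot be simultaneously upper-triangularized by two-sided unitary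
transformations. -/
theorem no_unitary_triangularization_of_quadratic_polynomial
    (U₁ U₂ : Matrix (Fin 2) (Fin 2) ℂ) (hU₁ : U₁ᴴ * U₁ = 1) (hU₂ : U₂ᴴ * U₂ = 1) :
    ¬ ((∀ i j : Fin 2, j < i → (U₂ᴴ * (!![0, 1; 0, 0] : Matrix (Fin 2) (Fin 2) ℂ) * U₁) i j = 0) ∧
       (∀ i j : Fin 2, j < i → (U₂ᴴ * (1 : Matrix (Fin 2) (Fin 2) ℂ) * U₁) i j = 0) ∧
       (∀ i j : Fin 2, j < i → (U₂ᴴ * (!![0, 0; 1, 0] : Matrix (Fin 2) (Fin 2) ℂ) * U₁) i j = 0)) := by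
  rintro ⟨h0, h1, h2⟩
  have e0 := h0 1 0 (by decide)
  have e1 := h1 1 0 (by decide)
  have e2 := h2 1 0 (by decide)
  have u1 := congrFun (congrFun hU₁ 0) 0
  have u2 := congrFun (congrFun hU₂ 1) 1
  simp [Matrix.mul_apply, Fin.sum_univ_two, conjTranspose_apply, Matrix.one_apply] at e0 e1 e2 u1 u2
  rcases e0 with a | a <;> rcases e2 with b | b <;>
    simp_all [mul_eq_zero, map_eq_zero] <;> rcases e1 with c | c <;> simp_all
end
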